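/- arXiv:2104.04992 — 7 statements merged into one kernel-verified Lean document; each statement's English description precedes it below -/
import Mathlib

section
/- Let H ∈ (1/2,1), a, b ∈ ℝ with a ≠ 0, and fix t > 0. Then the incremental variance of the completely correlated mixed fractional Brownian motion, which equals V(s) = a²(t−s) + a·b·∫_s^t K_H(t,u) du + b²(t−s)^{2H} for 0 < s < t, satisfies lim_{s→t⁻} V(s)/(a²(t−s)) = 1. Consequently the ccmfBm has Hölder index 1/2. -/
open MeasureTheory Real Set Filter

/-- The normalizing constant `c(H)` of the Molchan–Golosov kernel. -/
noncomputable def cH (H : ℝ) : ℝ :=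
  Real.sqrt (2 * H * Real.Gamma (3/2 - H) / (Real.Gamma (H + 1/2) * Real.Gamma (2 - 2*H)))
    * (H - 1/2)

/-- The Molchan–Golosov kernel `K_H(t,s)`; it vanishes for `s ≥ t`. -/
noncomputable def KH (H t s : ℝ) : ℝ :=
  if s < t then
    cH H * s ^ (-(H - 1/2)) * ∫ u in s..t, u ^ (H - 1/2) * (u - s) ^ (H - 3/2)
  else 0

/-- The covariance function of fractional Brownian motion. -/
noncomputable def RH (H t s : ℝ) : ℝ :=
  (t ^ (2*H) + s ^ (2*H) - |t - s| ^ (2*H)) / 2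

/-! For `s` close to `t` the kernel satisfies `0 ≤ K_H(t,u) ≤ M (t-u)^{H-1/2}` on `(s,t]`: in its
defining integral `v^{H-1/2} ≤ t^{H-1/2}`, the singular factor `(v-u)^{H-3/2}` integrates to
`(t-u)^{H-1/2}/(H-1/2)`, and the prefactor `u^{-(H-1/2)}` stays bounded once `u ≥ t/2`. Hence
`∫_s^t K_H(t,u) du = O((t-s)^{H+1/2})`, and this term as well as `(t-s)^{2H}` is `o(t-s)` because
`H > 1/2`; so `V(s) = a²(t-s) + o(t-s)`. -/

open Asymptotics Topology Interval

lemma cH_nonneg {H : ℝ} (hH : 1/2 ≤ H) : 0 ≤ cH H :=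
  mul_nonneg (sqrt_nonneg _) (by linarith)

lemma integral_rpow_mul_sub_rpow_le {p q u t : ℝ} (hp : 0 ≤ p) (hq : -1 < q) (hu : 0 ≤ u)
    (hut : u ≤ t) :
    ∫ v in u..t, v ^ p * (v - u) ^ q ≤ t ^ p * ((t - u) ^ (q + 1) / (q + 1)) := by
  have hsing : IntervalIntegrable (fun v => (v - u) ^ q) volume u t := by
    simpa using (intervalIntegral.intervalIntegrable_rpow' (a := 0) (b := t - u) hq).comp_sub_right u
  have hreg : ContinuousOn (fun v : ℝ => v ^ p) (uIcc u t) :=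
    continuousOn_id.rpow_const fun _ _ => Or.inr hp
  calc ∫ v in u..t, v ^ p * (v - u) ^ q
      ≤ ∫ v in u..t, t ^ p * (v - u) ^ q := by
        refine intervalIntegral.integral_mono_on hut (hsing.continuousOn_mul hreg)
          (hsing.const_mul _) fun v hv => ?_
        gcongr
        · exact rpow_nonneg (by linarith [hv.1]) _
        · linarith [hv.1]
        · exact hv.2
    _ = t ^ p * ((t - u) ^ (q + 1) / (q + 1)) := by
        rw [intervalIntegral.integral_const_mul, intervalIntegral.integral_comp_sub_right
          (fun x => x ^ q), sub_self, integral_rpow (Or.inl hq), zero_rpow (by linarith), sub_zero]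

lemma integral_rpow_mul_sub_rpow_nonneg {p q u t : ℝ} (hu : 0 ≤ u) (hut : u ≤ t) :
    0 ≤ ∫ v in u..t, v ^ p * (v - u) ^ q :=
  intervalIntegral.integral_nonneg hut fun v hv =>
    mul_nonneg (rpow_nonneg (by linarith [hv.1]) _) (rpow_nonneg (by linarith [hv.1]) _)

lemma KH_nonneg {H t u : ℝ} (hH : 1/2 ≤ H) (hu : 0 ≤ u) : 0 ≤ KH H t u := by
  unfold KH
  split_ifs with hut
  · exact mul_nonneg (mul_nonneg (cH_nonneg hH) (rpow_nonneg hu _))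
      (integral_rpow_mul_sub_rpow_nonneg hu hut.le)
  · exact le_rfl

lemma KH_le {H t s u : ℝ} (hH : 1/2 < H) (hs : 0 < s) (hsu : s ≤ u) (hut : u ≤ t) :
    KH H t u ≤ cH H * s ^ (-(H - 1/2)) * t ^ (H - 1/2) / (H - 1/2) * (t - u) ^ (H - 1/2) := by
  have hc := cH_nonneg hH.le
  have hu : 0 ≤ u := (hs.trans_le hsu).le
  unfold KH
  split_ifs with hut'
  · have hI := integral_rpow_mul_sub_rpow_le (p := H - 1/2) (q := H - 3/2) (by linarith)
      (by linarith) hu hut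
    rw [show H - 3/2 + 1 = H - 1/2 by ring] at hI
    calc cH H * u ^ (-(H - 1/2)) * ∫ v in u..t, v ^ (H - 1/2) * (v - u) ^ (H - 3/2)
        ≤ cH H * s ^ (-(H - 1/2)) * (t ^ (H - 1/2) * ((t - u) ^ (H - 1/2) / (H - 1/2))) := by
          have hsing : u ^ (-(H - 1/2)) ≤ s ^ (-(H - 1/2)) :=
            rpow_le_rpow_of_nonpos hs hsu (by linarith)
          have := integral_rpow_mul_sub_rpow_nonneg (p := H - 1/2) (q := H - 3/2) hu hut
          gcongr
      _ = _ := by ring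
  · rw [le_antisymm hut (not_lt.1 hut'), sub_self, zero_rpow (by linarith), mul_zero]

lemma integral_KH_isBigO {H t : ℝ} (hH : 1/2 < H) (ht : 0 < t) :
    (fun s => ∫ u in s..t, KH H t u) =O[𝓝[<] t] fun s => (t - s) ^ (H + 1/2) := by
  set M := cH H * (t/2) ^ (-(H - 1/2)) * t ^ (H - 1/2) / (H - 1/2)
  refine IsBigO.of_bound M ?_
  filter_upwards [Ioo_mem_nhdsLT (by linarith : t/2 < t)] with s ⟨hs, hst⟩
  have hbound : ∀ u ∈ Ι s t, ‖KH H t u‖ ≤ M * (t - s) ^ (H - 1/2) := by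
    intro u hu
    rw [uIoc_of_le hst.le] at hu
    rw [norm_of_nonneg (KH_nonneg hH.le (by linarith [hu.1]))]
    refine (KH_le hH (half_pos ht) (by linarith [hu.1]) hu.2).trans ?_
    have hM : 0 ≤ M := by
      have := cH_nonneg hH.le
      have : 0 < H - 1/2 := by linarith
      positivity
    exact mul_le_mul_of_nonneg_left
      (rpow_le_rpow (by linarith [hu.2]) (by linarith [hu.1]) (by linarith)) hM
  have hts : 0 < t - s := by linarith
  calc ‖∫ u in s..t, KH H t u‖ ≤ M * (t - s) ^ (H - 1/2) * |t - s| :=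
        intervalIntegral.norm_integral_le_of_norm_le_const hbound
    _ = M * ‖(t - s) ^ (H + 1/2)‖ := by
        rw [abs_of_pos hts, norm_of_nonneg (rpow_nonneg hts.le _), mul_assoc,
          ← rpow_add_one hts.ne']
        ring_nf

lemma sub_rpow_isLittleO_sub {t r : ℝ} (hr : 1 < r) :
    (fun s => (t - s) ^ r) =o[𝓝[<] t] fun s => t - s := by
  have hsmall : Tendsto (fun s => (t - s) ^ (r - 1)) (𝓝[<] t) (𝓝 0) := by
    have hcont : Continuous fun s : ℝ => (t - s) ^ (r - 1) :=
      (continuous_const.sub continuous_id).rpow_const fun _ => Or.inr (by linarith)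
    simpa [zero_rpow (by linarith : r - 1 ≠ 0)] using
      (hcont.tendsto t).mono_left nhdsWithin_le_nhds
  refine (((isLittleO_one_iff ℝ).2 hsmall).mul_isBigO (isBigO_refl (fun s => t - s) _)).congr'
    ?_ (by simp)
  filter_upwards [self_mem_nhdsWithin] with s hs
  rw [← rpow_add_one (sub_pos.2 hs).ne']
  ring_nf

/-- Short-time behaviour of the ccmfBm: the incremental variance
`V(s) = a²(t−s) + ab∫_s^t K_H(t,u)du + b²(t−s)^{2H}` satisfies
`V(s)/(a²(t−s)) → 1` as `s → t⁻` (through `s ∈ (0,t)`); hence the Hölder index is `1/2`. -/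
theorem ccmfBm_incremental_variance_asymptotics (H a b t : ℝ)
    (hH : H ∈ Set.Ioo (1/2 : ℝ) 1) (ha : a ≠ 0) (ht : 0 < t) :
    Filter.Tendsto
      (fun s => (a^2 * (t - s) + a * b * (∫ u in s..t, KH H t u) + b^2 * (t - s) ^ (2*H))
        / (a^2 * (t - s)))
      (nhdsWithin t (Set.Ioo 0 t)) (nhds 1) := by
  have hrest : (fun s => a * b * (∫ u in s..t, KH H t u) + b^2 * (t - s) ^ (2*H))
      =o[𝓝[<] t] fun s => t - s :=
    (((integral_KH_isBigO hH.1 ht).trans_isLittleO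
      (sub_rpow_isLittleO_sub (by linarith [hH.1]))).const_mul_left _).add
      ((sub_rpow_isLittleO_sub (by linarith [hH.1])).const_mul_left _)
  have hlim := (tendsto_const_nhds (x := (1 : ℝ))).add
    (hrest.tendsto_div_nhds_zero.div_const (a ^ 2))
  rw [zero_div, add_zero] at hlim
  refine (hlim.congr' ?_).mono_left (nhdsWithin_mono _ Ioo_subset_Iio_self)
  filter_upwards [self_mem_nhdsWithin] with s hs
  have : t - s ≠ 0 := (sub_pos.2 hs).ne'
  field_simp
  ring
end

section
/- Let H ∈ (1/2,1) and T > 0. Then ∫₀^T ∫_s^T (t/s)^{2H−1} (t−s)^{2H−3} dt ds = ∞; that is, the function (t,s) ↦ [∂K_H/∂t (t,s)]² = c(H)²(t/s)^{2H−1}(t−s)^{2H−3} is not integrable over the triangle {0 < s < t < T}. Consequently, by Hitsuda's criterion, the law of the ccmfBm with b ≠ 0 on [0,T] is singular with respect to the law of any multiple of Brownian motion. -/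
/-
The inner integral is already infinite for every `s ∈ (0, T)`: since `t/s ≥ 1` and `2H - 1 ≥ 0`,
the integrand dominates `(t - s)^(2H-3)`, whose exponent is `< -1`, so it is not integrable at
`t = s`. An integral of `∞` over a set of positive measure is `∞`.
-/

open MeasureTheory Real Set Filter

lemma lintegral_Ioo_rpow_eq_top {r a : ℝ} (hr : r ≤ -1) (ha : 0 < a) :
    ∫⁻ x in Ioo 0 a, ENNReal.ofReal (x ^ r) = ⊤ := by
  by_contra h
  have hint : IntegrableOn (fun x : ℝ ↦ x ^ r) (Ioo 0 a) :=
    (lintegral_ofReal_ne_top_iff_integrable (by fun_prop)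
      ((ae_restrict_iff' measurableSet_Ioo).2 (.of_forall fun x hx ↦
        Real.rpow_nonneg hx.1.le r))).1 h
  rw [intervalIntegral.integrableOn_Ioo_rpow_iff ha] at hint
  linarith

lemma lintegral_Ioo_sub_rpow_eq_top {r s T : ℝ} (hr : r ≤ -1) (hsT : s < T) :
    ∫⁻ t in Ioo s T, ENNReal.ofReal ((t - s) ^ r) = ⊤ := by
  rw [← (measurePreserving_add_right volume s).setLIntegral_comp_preimage_emb
    (measurableEmbedding_addRight s), preimage_add_const_Ioo, sub_self]
  simpa only [add_sub_cancel_right] using lintegral_Ioo_rpow_eq_top hr (sub_pos.2 hsT)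

lemma lintegral_Ioo_div_rpow_mul_sub_rpow_eq_top {a r s T : ℝ} (ha : 0 ≤ a) (hr : r ≤ -1)
    (hs : 0 < s) (hsT : s < T) :
    ∫⁻ t in Ioo s T, ENNReal.ofReal ((t / s) ^ a * (t - s) ^ r) = ⊤ := by
  refine top_unique (lintegral_Ioo_sub_rpow_eq_top hr hsT ▸ setLIntegral_mono (by fun_prop) ?_)
  intro t ht
  have hratio : 1 ≤ (t / s) ^ a := Real.one_le_rpow ((one_le_div hs).2 ht.1.le) ha
  exact ENNReal.ofReal_le_ofReal
    (le_mul_of_one_le_left (Real.rpow_nonneg (sub_nonneg.2 ht.1.le) r) hratio)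

/-- Non-integrability of the squared derivative of the Molchan–Golosov kernel:
`∫₀^T ∫_s^T (t/s)^{2H−1}(t−s)^{2H−3} dt ds = ∞`.  By Hitsuda's criterion this entails
that the law of the ccmfBm with `b ≠ 0` is singular to the law of any multiple of Bm. -/
theorem KH_derivative_not_square_integrable (H T : ℝ) (hH : H ∈ Set.Ioo (1/2 : ℝ) 1)
    (hT : 0 < T) :
    ∫⁻ s in Set.Ioo (0:ℝ) T, ∫⁻ t in Set.Ioo s T,
      ENNReal.ofReal ((t/s) ^ (2*H - 1) * (t - s) ^ (2*H - 3)) = ⊤ := by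
  have hinner : EqOn (fun s ↦ ∫⁻ t in Ioo s T,
      ENNReal.ofReal ((t / s) ^ (2*H - 1) * (t - s) ^ (2*H - 3))) (fun _ ↦ ⊤) (Ioo 0 T) :=
    fun s hs ↦ lintegral_Ioo_div_rpow_mul_sub_rpow_eq_top (by linarith [hH.1]) (by linarith [hH.2])
      hs.1 hs.2
  rw [setLIntegral_congr_fun measurableSet_Ioo hinner, setLIntegral_const, Real.volume_Ioo,
    ENNReal.top_mul (ENNReal.ofReal_pos.2 (by linarith)).ne']
end

section
/- Let H ∈ (1/2,1) and T > 0. The linear map K*_H defined by (K*_H f)(t) = c(H)·t^{−(H−1/2)}·∫_t^T f(u)·u^{H−1/2}·(u−t)^{H−3/2} du is a bounded linear operator from L²([0,T]) to L²([0,T]), with ‖K*_H f‖_{L²} ≤ sqrt(2H)·T^{H−1/2}·‖f‖_{L²}. -/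
/-!
With `e = H - 1/2`, `K*_H f (t) = c(H) ∫ k(t,u) f(u) du` for the nonnegative kernel
`k(t,u) = t^{-e} u^e (u-t)^{e-1} 1_{t<u}`. Schur's test with the weight `p(t) = t^{-e}` bounds
`K*_H` on `L²`: since `u^e ≤ T^e`, `∫ k(t,u) du ≤ (T^{2e}/e) p(t)`, while
`∫ k(t,u) p(t) dt = u^e ∫_0^u t^{1-2H} (u-t)^{e-1} dt = B(2-2H, e)` is a Beta integral independent
of `u`. The resulting bound `c(H)² T^{2e} B(2-2H, e) / e` equals `2H T^{2e}`, because `c(H)` is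
normalized by exactly these Gamma values.
-/

open MeasureTheory Real Set Filter

/-- The adjoint associated operator `K*_H` of the Molchan–Golosov kernel on `[0,T]`:
`(K*_H f)(t) = c(H)·t^{−(H−1/2)}·∫_t^T f(u)·u^{H−1/2}·(u−t)^{H−3/2} du`. -/
noncomputable def Kstar (H T : ℝ) (f : ℝ → ℝ) (t : ℝ) : ℝ :=
  cH H * t ^ (-(H - 1/2)) * ∫ u in t..T, f u * u ^ (H - 1/2) * (u - t) ^ (H - 3/2)

open scoped ENNReal
open ProbabilityTheory (beta beta_pos)

theorem lintegral_mul_sq_le {α : Type*} [MeasurableSpace α] {μ : Measure α} {w g : α → ℝ≥0∞}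
    (hw : AEMeasurable w μ) (hg : AEMeasurable g μ) :
    (∫⁻ a, w a * g a ∂μ) ^ 2 ≤ (∫⁻ a, w a ∂μ) * ∫⁻ a, w a * g a ^ 2 ∂μ := by
  have hsplit : ∀ a, w a * g a = w a ^ (2⁻¹ : ℝ) * (w a ^ (2⁻¹ : ℝ) * g a) := fun a => by
    rw [← mul_assoc, ← ENNReal.rpow_add_of_nonneg _ _ (by norm_num) (by norm_num)]
    norm_num
  have hholder := ENNReal.lintegral_mul_le_Lp_mul_Lq μ Real.HolderConjugate.two_two
    (hw.pow_const (2⁻¹ : ℝ)) ((hw.pow_const (2⁻¹ : ℝ)).mul hg)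
  simp only [Pi.mul_apply, ← hsplit] at hholder
  calc (∫⁻ a, w a * g a ∂μ) ^ 2
      ≤ ((∫⁻ a, (w a ^ (2⁻¹ : ℝ)) ^ (2 : ℝ) ∂μ) ^ (1 / 2 : ℝ) *
          (∫⁻ a, (w a ^ (2⁻¹ : ℝ) * g a) ^ (2 : ℝ) ∂μ) ^ (1 / 2 : ℝ)) ^ 2 := by gcongr
    _ = (∫⁻ a, w a ∂μ) * ∫⁻ a, w a * g a ^ 2 ∂μ := by
      simp only [ENNReal.mul_rpow_of_nonneg _ _ zero_le_two, ← ENNReal.rpow_mul, mul_pow]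
      simp only [← ENNReal.rpow_natCast, ← ENNReal.rpow_mul]
      norm_num

/-- Schur's test, with the test function on the `Y` side equal to `1`. -/
theorem lintegral_sq_lintegral_mul_le_of_schur {X Y : Type*} [MeasurableSpace X]
    [MeasurableSpace Y] {μ : Measure X} {ν : Measure Y} [SFinite μ] [SFinite ν]
    {k : X → Y → ℝ≥0∞} {p : X → ℝ≥0∞} {g : Y → ℝ≥0∞} {α β : ℝ≥0∞}
    (hk : Measurable (Function.uncurry k)) (hp : Measurable p) (hg : AEMeasurable g ν)
    (hα : ∀ᵐ x ∂μ, ∫⁻ y, k x y ∂ν ≤ α * p x) (hβ : ∀ᵐ y ∂ν, ∫⁻ x, k x y * p x ∂μ ≤ β) :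
    ∫⁻ x, (∫⁻ y, k x y * g y ∂ν) ^ 2 ∂μ ≤ α * β * ∫⁻ y, g y ^ 2 ∂ν := by
  calc ∫⁻ x, (∫⁻ y, k x y * g y ∂ν) ^ 2 ∂μ
      ≤ ∫⁻ x, α * (p x * ∫⁻ y, k x y * g y ^ 2 ∂ν) ∂μ := by
        refine lintegral_mono_ae ?_
        filter_upwards [hα] with x hx
        refine (lintegral_mul_sq_le hk.of_uncurry_left.aemeasurable hg).trans ?_
        rw [← mul_assoc]
        gcongr
    _ = α * ∫⁻ y, (∫⁻ x, k x y * p x ∂μ) * g y ^ 2 ∂ν := by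
        rw [lintegral_const_mul'' _ (by fun_prop)]
        congr 1
        calc ∫⁻ x, p x * ∫⁻ y, k x y * g y ^ 2 ∂ν ∂μ
            = ∫⁻ x, ∫⁻ y, k x y * p x * g y ^ 2 ∂ν ∂μ := by
              refine lintegral_congr fun x => ?_
              rw [← lintegral_const_mul'' _ (by fun_prop)]
              congr 1 with y
              ring
          _ = ∫⁻ y, ∫⁻ x, k x y * p x * g y ^ 2 ∂μ ∂ν :=
              lintegral_lintegral_swap (by fun_prop)
          _ = ∫⁻ y, (∫⁻ x, k x y * p x ∂μ) * g y ^ 2 ∂ν :=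
              lintegral_congr fun y => lintegral_mul_const _ (by fun_prop)
    _ ≤ α * ∫⁻ y, β * g y ^ 2 ∂ν := by
        gcongr 1
        refine lintegral_mono_ae ?_
        filter_upwards [hβ] with y hy
        gcongr
    _ = α * β * ∫⁻ y, g y ^ 2 ∂ν := by
        rw [lintegral_const_mul'' _ (hg.pow_const 2), mul_assoc]

theorem eLpNorm_two_sq {α E : Type*} [MeasurableSpace α] {μ : Measure α} [NormedAddCommGroup E]
    (f : α → E) : eLpNorm f 2 μ ^ 2 = ∫⁻ a, ‖f a‖ₑ ^ 2 ∂μ := by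
  have := eLpNorm_nnreal_pow_eq_lintegral (f := f) (μ := μ) (p := 2) two_ne_zero
  simp only [NNReal.coe_ofNat, ENNReal.rpow_ofNat] at this
  exact_mod_cast this

theorem eLpNorm_two_le_of_lintegral_sq_le {α E F : Type*} [MeasurableSpace α] {μ : Measure α}
    [NormedAddCommGroup E] [NormedAddCommGroup F] {f : α → E} {g : α → F} {C : ℝ≥0∞}
    (h : ∫⁻ a, ‖f a‖ₑ ^ 2 ∂μ ≤ C ^ 2 * ∫⁻ a, ‖g a‖ₑ ^ 2 ∂μ) :
    eLpNorm f 2 μ ≤ C * eLpNorm g 2 μ := by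
  rwa [← ENNReal.pow_le_pow_left_iff two_ne_zero, mul_pow, eLpNorm_two_sq,
    eLpNorm_two_sq]

theorem integral_rpow_mul_sub_rpow {a b u : ℝ} (ha : 0 < a) (hb : 0 < b) (hu : 0 < u) :
    ∫ t in 0..u, t ^ (a - 1) * (u - t) ^ (b - 1) = u ^ (a + b - 1) * beta a b := by
  apply Complex.ofReal_injective
  rw [← intervalIntegral.integral_ofReal]
  have hcpow : ∫ t in 0..u, ((t ^ (a - 1) * (u - t) ^ (b - 1) : ℝ) : ℂ) =
      ∫ t in 0..u, (t : ℂ) ^ ((a : ℂ) - 1) * ((u : ℂ) - t) ^ ((b : ℂ) - 1) := by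
    refine intervalIntegral.integral_congr fun t ht => ?_
    rw [uIcc_of_le hu.le] at ht
    push_cast [Complex.ofReal_cpow ht.1, Complex.ofReal_cpow (sub_nonneg.2 ht.2)]
    rfl
  rw [hcpow, Complex.betaIntegral_scaled _ _ hu,
    Complex.betaIntegral_eq_Gamma_mul_div _ _ (by simpa) (by simpa), beta]
  push_cast [Complex.ofReal_cpow hu.le, ← Complex.Gamma_ofReal]
  ring_nf

theorem setLIntegral_rpow_mul_sub_rpow {a b u : ℝ} (ha : 0 < a) (hb : 0 < b) (hu : 0 < u) :
    ∫⁻ t in Ioo 0 u, ENNReal.ofReal (t ^ (a - 1) * (u - t) ^ (b - 1)) =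
      ENNReal.ofReal (u ^ (a + b - 1) * beta a b) := by
  have hI := integral_rpow_mul_sub_rpow ha hb hu
  rw [intervalIntegral.integral_of_le hu.le, integral_Ioc_eq_integral_Ioo] at hI
  have hpos : 0 < u ^ (a + b - 1) * beta a b :=
    mul_pos (rpow_pos_of_pos hu _) (beta_pos ha hb)
  rw [← hI, ofReal_integral_eq_lintegral_ofReal (.of_integral_ne_zero (hI ▸ hpos.ne'))]
  refine (ae_restrict_iff' measurableSet_Ioo).2 (ae_of_all _ fun t ht => ?_)
  have := ht.1.le
  have := sub_nonneg.2 ht.2.le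
  positivity

theorem setLIntegral_sub_rpow {e t T : ℝ} (he : 0 < e) (htT : t ≤ T) :
    ∫⁻ u in Ioc t T, ENNReal.ofReal ((u - t) ^ (e - 1)) = ENNReal.ofReal ((T - t) ^ e / e) := by
  have hint : IntegrableOn (fun u => (u - t) ^ (e - 1)) (Ioc t T) := by
    rw [← intervalIntegrable_iff_integrableOn_Ioc_of_le htT]
    simpa using (intervalIntegral.intervalIntegrable_rpow' (r := e - 1) (by linarith)
      (a := 0) (b := T - t)).comp_sub_right t
  have hnonneg : 0 ≤ᵐ[volume.restrict (Ioc t T)] fun u => (u - t) ^ (e - 1) :=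
    (ae_restrict_iff' measurableSet_Ioc).2
      (ae_of_all _ fun u hu => rpow_nonneg (sub_nonneg.2 hu.1.le) _)
  rw [← ofReal_integral_eq_lintegral_ofReal hint hnonneg, ← intervalIntegral.integral_of_le htT,
    intervalIntegral.integral_comp_sub_right (fun x => x ^ (e - 1)), sub_self,
    integral_rpow (Or.inl (by linarith)), sub_add_cancel, zero_rpow he.ne', sub_zero]

theorem restrict_Ioc_restrict_Ioi {t T : ℝ} (ht : 0 ≤ t) :
    (volume.restrict (Ioc 0 T)).restrict (Ioi t) = volume.restrict (Ioc t T) := by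
  rw [Measure.restrict_restrict measurableSet_Ioi, inter_comm, Ioc_inter_Ioi, max_eq_right ht]

/-- The kernel of `K*_H / c(H)`: `Kstar H T f t = cH H * ∫ u in Ioc 0 T, kstarKernel H t u * f u`
for `0 < t ≤ T`. -/
noncomputable def kstarKernel (H t u : ℝ) : ℝ≥0∞ :=
  if t < u then ENNReal.ofReal (t ^ (-(H - 1/2)) * u ^ (H - 1/2) * (u - t) ^ (H - 3/2)) else 0

theorem measurable_kstarKernel (H : ℝ) : Measurable (Function.uncurry (kstarKernel H)) :=
  Measurable.ite (measurableSet_lt measurable_fst measurable_snd) (by fun_prop) measurable_const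

theorem setLIntegral_kstarKernel_mul {H t T : ℝ} (ht : 0 ≤ t) (g : ℝ → ℝ≥0∞) :
    ∫⁻ u in Ioc 0 T, kstarKernel H t u * g u =
      ∫⁻ u in Ioc t T,
        ENNReal.ofReal (t ^ (-(H - 1/2)) * u ^ (H - 1/2) * (u - t) ^ (H - 3/2)) * g u := by
  rw [← restrict_Ioc_restrict_Ioi ht, ← lintegral_indicator measurableSet_Ioi]
  congr 1 with u
  by_cases hu : t < u <;> simp [kstarKernel, hu]

theorem enorm_Kstar_le {H T t : ℝ} (ht : t ∈ Ioc 0 T) (f : ℝ → ℝ) :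
    ‖Kstar H T f t‖ₑ ≤ ‖cH H‖ₑ * ∫⁻ u in Ioc 0 T, kstarKernel H t u * ‖f u‖ₑ := by
  obtain ⟨ht0, htT⟩ := ht
  rw [Kstar, enorm_mul, enorm_mul, mul_assoc, setLIntegral_kstarKernel_mul ht0.le,
    intervalIntegral.integral_of_le htT]
  gcongr
  calc ‖t ^ (-(H - 1/2))‖ₑ * ‖∫ u in Ioc t T, f u * u ^ (H - 1/2) * (u - t) ^ (H - 3/2)‖ₑ
      ≤ ‖t ^ (-(H - 1/2))‖ₑ * ∫⁻ u in Ioc t T, ‖f u * u ^ (H - 1/2) * (u - t) ^ (H - 3/2)‖ₑ := by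
        gcongr
        exact enorm_integral_le_lintegral_enorm _
    _ = _ := by
        rw [← lintegral_const_mul' _ _ enorm_ne_top]
        refine setLIntegral_congr_fun measurableSet_Ioc fun u hu => ?_
        have hu0 : 0 ≤ u := ht0.le.trans hu.1.le
        have htu : 0 ≤ u - t := sub_nonneg.2 hu.1.le
        rw [enorm_mul, enorm_mul, Real.enorm_of_nonneg (rpow_nonneg ht0.le _),
          Real.enorm_of_nonneg (rpow_nonneg hu0 _), Real.enorm_of_nonneg (rpow_nonneg htu _),
          ENNReal.ofReal_mul (by positivity), ENNReal.ofReal_mul (by positivity)]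
        ring

theorem setLIntegral_kstarKernel_le {H T t : ℝ} (hH : 1/2 < H) (ht : t ∈ Ioc 0 T) :
    ∫⁻ u in Ioc 0 T, kstarKernel H t u ≤
      ENNReal.ofReal ((T ^ (H - 1/2)) ^ 2 / (H - 1/2)) * ENNReal.ofReal (t ^ (-(H - 1/2))) := by
  have he : 0 < H - 1/2 := by linarith
  obtain ⟨ht0, htT⟩ := ht
  have hT : 0 < T := ht0.trans_le htT
  calc ∫⁻ u in Ioc 0 T, kstarKernel H t u
      = ∫⁻ u in Ioc t T,
          ENNReal.ofReal (t ^ (-(H - 1/2)) * u ^ (H - 1/2) * (u - t) ^ (H - 3/2)) := by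
        simpa using setLIntegral_kstarKernel_mul (H := H) (T := T) ht0.le 1
    _ ≤ ∫⁻ u in Ioc t T, ENNReal.ofReal (t ^ (-(H - 1/2)) * T ^ (H - 1/2)) *
          ENNReal.ofReal ((u - t) ^ ((H - 1/2) - 1)) := by
        refine setLIntegral_mono' measurableSet_Ioc fun u hu => ?_
        have hu0 : 0 ≤ u := ht0.le.trans hu.1.le
        have htu : 0 ≤ u - t := sub_nonneg.2 hu.1.le
        rw [← ENNReal.ofReal_mul (by positivity), show H - 1/2 - 1 = H - 3/2 by ring]
        gcongr
        exact hu.2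
    _ = ENNReal.ofReal (t ^ (-(H - 1/2)) * T ^ (H - 1/2)) *
          ENNReal.ofReal ((T - t) ^ (H - 1/2) / (H - 1/2)) := by
        rw [lintegral_const_mul' _ _ ENNReal.ofReal_ne_top, setLIntegral_sub_rpow he htT]
    _ ≤ _ := by
        rw [← ENNReal.ofReal_mul (by positivity), ← ENNReal.ofReal_mul (by positivity)]
        apply ENNReal.ofReal_le_ofReal
        have : (T - t) ^ (H - 1/2) ≤ T ^ (H - 1/2) :=
          rpow_le_rpow (by linarith) (by linarith) he.le
        calc t ^ (-(H - 1/2)) * T ^ (H - 1/2) * ((T - t) ^ (H - 1/2) / (H - 1/2))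
            ≤ t ^ (-(H - 1/2)) * T ^ (H - 1/2) * (T ^ (H - 1/2) / (H - 1/2)) := by gcongr
          _ = _ := by ring

theorem setLIntegral_kstarKernel_mul_rpow {H T u : ℝ} (hH : H ∈ Ioo (1/2) 1) (hu : u ∈ Ioc 0 T) :
    ∫⁻ t in Ioc 0 T, kstarKernel H t u * ENNReal.ofReal (t ^ (-(H - 1/2))) =
      ENNReal.ofReal (beta (2 - 2 * H) (H - 1/2)) := by
  obtain ⟨hu0, huT⟩ := hu
  have hset : Iio u ∩ Ioc 0 T = Ioo 0 u := by
    ext t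
    simp only [mem_inter_iff, mem_Iio, mem_Ioc, mem_Ioo]
    constructor
    · rintro ⟨htu, ht0, -⟩
      exact ⟨ht0, htu⟩
    · rintro ⟨ht0, htu⟩
      exact ⟨htu, ht0, htu.le.trans huT⟩
  calc ∫⁻ t in Ioc 0 T, kstarKernel H t u * ENNReal.ofReal (t ^ (-(H - 1/2)))
      = ∫⁻ t in Ioo 0 u, ENNReal.ofReal (t ^ (-(H - 1/2)) * u ^ (H - 1/2) * (u - t) ^ (H - 3/2)) *
          ENNReal.ofReal (t ^ (-(H - 1/2))) := by
        rw [← hset, ← Measure.restrict_restrict measurableSet_Iio,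
          ← lintegral_indicator measurableSet_Iio]
        congr 1 with t
        by_cases htu : t < u <;> simp [kstarKernel, htu]
    _ = ∫⁻ t in Ioo 0 u, ENNReal.ofReal (u ^ (H - 1/2)) *
          ENNReal.ofReal (t ^ ((2 - 2 * H) - 1) * (u - t) ^ ((H - 1/2) - 1)) := by
        refine setLIntegral_congr_fun measurableSet_Ioo fun t ⟨ht0, htu⟩ => ?_
        have := sub_nonneg.2 htu.le
        rw [← ENNReal.ofReal_mul (by positivity), ← ENNReal.ofReal_mul (by positivity)]
        congr 1
        rw [show (2 - 2 * H) - 1 = -(H - 1/2) + -(H - 1/2) by ring, rpow_add ht0]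
        ring_nf
    _ = ENNReal.ofReal (beta (2 - 2 * H) (H - 1/2)) := by
        rw [lintegral_const_mul' _ _ ENNReal.ofReal_ne_top,
          setLIntegral_rpow_mul_sub_rpow (by linarith [hH.2]) (by linarith [hH.1]) hu0,
          ← ENNReal.ofReal_mul (by positivity), ← mul_assoc, ← rpow_add hu0,
          show H - 1/2 + (2 - 2 * H + (H - 1/2) - 1) = 0 by ring, rpow_zero, one_mul]

theorem aestronglyMeasurable_Kstar {H T : ℝ} {f : ℝ → ℝ}
    (hf : AEStronglyMeasurable f (volume.restrict (Ioc 0 T))) :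
    AEStronglyMeasurable (Kstar H T f) (volume.restrict (Ioc 0 T)) := by
  set ν := volume.restrict (Ioc (0 : ℝ) T)
  let F : ℝ × ℝ → ℝ := {p | p.1 < p.2}.indicator
    fun p => f p.2 * p.2 ^ (H - 1/2) * (p.2 - p.1) ^ (H - 3/2)
  have hF : AEStronglyMeasurable F (ν.prod ν) :=
    ((hf.comp_snd.mul (by fun_prop : Measurable _).aestronglyMeasurable).mul
      (by fun_prop : Measurable _).aestronglyMeasurable).indicator
      (measurableSet_lt measurable_fst measurable_snd)
  refine (((by fun_prop : Measurable fun t : ℝ => cH H * t ^ (-(H - 1/2))).aestronglyMeasurable).mul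
    hF.integral_prod_right').congr ?_
  refine (ae_restrict_iff' measurableSet_Ioc).2 (ae_of_all _ fun t ⟨ht0, htT⟩ => ?_)
  rw [Kstar, intervalIntegral.integral_of_le htT, ← restrict_Ioc_restrict_Ioi ht0.le,
    ← integral_indicator measurableSet_Ioi]
  rfl

theorem setLIntegral_enorm_Kstar_sq_le {H T : ℝ} (f : ℝ → ℝ) :
    ∫⁻ t in Ioc 0 T, ‖Kstar H T f t‖ₑ ^ 2 ≤
      ‖cH H‖ₑ ^ 2 * ∫⁻ t in Ioc 0 T, (∫⁻ u in Ioc 0 T, kstarKernel H t u * ‖f u‖ₑ) ^ 2 := by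
  rw [← lintegral_const_mul' _ _ (by simp)]
  refine setLIntegral_mono' measurableSet_Ioc fun t ht => ?_
  rw [← mul_pow]
  gcongr
  exact enorm_Kstar_le ht f

theorem cH_sq_mul_beta {H : ℝ} (hH : H ∈ Ioo (1/2) 1) :
    cH H ^ 2 * beta (2 - 2 * H) (H - 1/2) = 2 * H * (H - 1/2) := by
  obtain ⟨hH0, hH1⟩ := hH
  have hΓ₁ : 0 < Gamma (3/2 - H) := Gamma_pos_of_pos (by linarith)
  have hΓ₂ : 0 < Gamma (H - 1/2) := Gamma_pos_of_pos (by linarith)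
  have hΓ₃ : 0 < Gamma (2 - 2 * H) := Gamma_pos_of_pos (by linarith)
  have hΓ₄ : Gamma (H + 1/2) = (H - 1/2) * Gamma (H - 1/2) := by
    rw [← Gamma_add_one (by linarith)]
    ring_nf
  rw [cH, mul_pow, sq_sqrt (by positivity), beta, hΓ₄,
    show 2 - 2 * H + (H - 1/2) = 3/2 - H by ring]
  have : H - 1/2 ≠ 0 := by linarith
  generalize Gamma (3/2 - H) = a at *
  generalize Gamma (H - 1/2) = b at *
  generalize Gamma (2 - 2 * H) = c at *
  field_simp

theorem enorm_cH_sq_mul_beta {H T : ℝ} (hH : H ∈ Ioo (1/2) 1) (hT : 0 ≤ T) :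
    ‖cH H‖ₑ ^ 2 * (ENNReal.ofReal ((T ^ (H - 1/2)) ^ 2 / (H - 1/2)) *
      ENNReal.ofReal (beta (2 - 2 * H) (H - 1/2))) =
      ENNReal.ofReal (√(2 * H) * T ^ (H - 1/2)) ^ 2 := by
  have he : 0 < H - 1/2 := by linarith [hH.1]
  rw [Real.enorm_eq_ofReal_abs, ← ENNReal.ofReal_pow (abs_nonneg _), sq_abs,
    ← ENNReal.ofReal_mul (by positivity), ← ENNReal.ofReal_mul (by positivity),
    ← ENNReal.ofReal_pow (by positivity), mul_pow, sq_sqrt (by linarith [hH.1])]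
  congr 1
  rw [show ∀ c X B : ℝ, c * (X / (H - 1/2) * B) = c * B * X / (H - 1/2) by intros; ring,
    cH_sq_mul_beta hH, mul_right_comm, mul_div_cancel_right₀ _ he.ne']

/-- `K*_H` is a bounded linear operator on `L²([0,T])` with
`‖K*_H f‖ ≤ sqrt(2H)·T^{H−1/2}·‖f‖`. -/
theorem Kstar_bounded (H T : ℝ) (hH : H ∈ Set.Ioo (1/2 : ℝ) 1) (hT : 0 < T) :
    ∀ f : ℝ → ℝ, MemLp f 2 (volume.restrict (Set.Ioc (0:ℝ) T)) →
      MemLp (Kstar H T f) 2 (volume.restrict (Set.Ioc (0:ℝ) T)) ∧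
      eLpNorm (Kstar H T f) 2 (volume.restrict (Set.Ioc (0:ℝ) T))
        ≤ ENNReal.ofReal (Real.sqrt (2*H) * T ^ (H - 1/2)) *
            eLpNorm f 2 (volume.restrict (Set.Ioc (0:ℝ) T)) := by
  intro f hf
  have hsq : ∫⁻ t in Ioc 0 T, ‖Kstar H T f t‖ₑ ^ 2 ≤
      ENNReal.ofReal (√(2 * H) * T ^ (H - 1/2)) ^ 2 * ∫⁻ u in Ioc 0 T, ‖f u‖ₑ ^ 2 := by
    refine (setLIntegral_enorm_Kstar_sq_le f).trans ?_
    rw [← enorm_cH_sq_mul_beta hH hT.le, mul_assoc]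
    gcongr
    exact lintegral_sq_lintegral_mul_le_of_schur (measurable_kstarKernel H) (by fun_prop)
      hf.1.enorm
      ((ae_restrict_iff' measurableSet_Ioc).2 (ae_of_all _ fun t ht =>
        setLIntegral_kstarKernel_le hH.1 ht))
      ((ae_restrict_iff' measurableSet_Ioc).2 (ae_of_all _ fun u hu =>
        (setLIntegral_kstarKernel_mul_rpow hH hu).le))
  have hle := eLpNorm_two_le_of_lintegral_sq_le hsq
  exact ⟨⟨aestronglyMeasurable_Kstar hf.1,
    hle.trans_lt (ENNReal.mul_lt_top ENNReal.ofReal_lt_top hf.2)⟩, hle⟩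
end

section
/- Let H ∈ (1/2,1), T > 0, α = H − 1/2, and let K*_H be the operator (K*_H f)(s) = c(H)·s^{−α}·∫_s^T f(u)·u^{α}·(u−s)^{α−1} du on L²([0,T]). Then for every k ≥ 1 and every 0 < s < t ≤ T, the k-fold iterate satisfies ((K*_H)^k 1_{[0,t)})(s) = γ_k(t,s), where γ_k(t,s) = (c(H)^k Γ(α)^k / Γ(kα)) · s^{−α} · ∫_s^t u^{α} (u−s)^{kα−1} du. In particular γ_1(t,s) = K_H(t,s). -/
open MeasureTheory Real Set Filter


lemma real_beta_scaled {a b d : ℝ} (ha : 0 < a) (hb : 0 < b) (hd : 0 < d) :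
    ∫ x in (0:ℝ)..d, x ^ (b-1) * (d - x) ^ (a-1)
      = d ^ (a+b-1) * (Real.Gamma b * Real.Gamma a / Real.Gamma (a+b)) := by
  have hb' : (0:ℝ) < (b:ℂ).re := by simpa using hb
  have ha' : (0:ℝ) < (a:ℂ).re := by simpa using ha
  have hΓ : Complex.Gamma ((b:ℂ) + a) ≠ 0 := by
    rw [show ((b:ℂ) + a) = ((b+a : ℝ) : ℂ) by push_cast; ring, Complex.Gamma_ofReal]
    exact_mod_cast (Real.Gamma_pos_of_pos (by linarith)).ne'
  have hbeta : Complex.betaIntegral b a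
      = (Complex.Gamma b * Complex.Gamma a) / Complex.Gamma ((b:ℂ) + a) := by
    rw [Complex.Gamma_mul_Gamma_eq_betaIntegral hb' ha']
    field_simp
  have hscaled := Complex.betaIntegral_scaled (b:ℂ) (a:ℂ) hd
  -- LHS of hscaled equals coercion of real integral
  have hLHS : (∫ x in (0:ℝ)..d, (x:ℂ) ^ ((b:ℂ) - 1) * ((d:ℂ) - x) ^ ((a:ℂ) - 1))
      = ((∫ x in (0:ℝ)..d, x ^ (b-1) * (d - x) ^ (a-1) : ℝ) : ℂ) := by
    rw [intervalIntegral.integral_congr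
      (g := fun x : ℝ => (((x ^ (b-1) * (d - x) ^ (a-1) : ℝ)) : ℂ)) (fun x hx => by
        rw [uIcc_of_le hd.le] at hx
        rw [show ((b:ℂ) - 1) = ((b-1:ℝ):ℂ) by push_cast; ring,
          show ((a:ℂ) - 1) = ((a-1:ℝ):ℂ) by push_cast; ring,
          show ((d:ℂ) - (x:ℂ)) = ((d - x : ℝ):ℂ) by push_cast; ring,
          ← Complex.ofReal_cpow hx.1, ← Complex.ofReal_cpow (by linarith [hx.2])]
        push_cast
        ring)]
    exact RCLike.intervalIntegral_ofReal
  rw [hLHS, hbeta] at hscaled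
  have : ((∫ x in (0:ℝ)..d, x ^ (b-1) * (d - x) ^ (a-1) : ℝ) : ℂ)
      = ((d ^ (a+b-1) * (Real.Gamma b * Real.Gamma a / Real.Gamma (a+b)) : ℝ) : ℂ) := by
    rw [hscaled]
    rw [show ((b:ℂ) + a - 1) = ((a+b-1 : ℝ) : ℂ) by push_cast; ring,
      show ((b:ℂ) + a) = ((a+b : ℝ) : ℂ) by push_cast; ring,
      ← Complex.ofReal_cpow hd.le, Complex.Gamma_ofReal, Complex.Gamma_ofReal,
      Complex.Gamma_ofReal]
    push_cast
    ring
  exact_mod_cast this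

lemma real_beta_shift {a b s v : ℝ} (ha : 0 < a) (hb : 0 < b) (hsv : s < v) :
    ∫ u in s..v, (u - s) ^ (b-1) * (v - u) ^ (a-1)
      = (v - s) ^ (a+b-1) * (Real.Gamma b * Real.Gamma a / Real.Gamma (a+b)) := by
  have h := intervalIntegral.integral_comp_add_right
    (a := 0) (b := v - s) (fun u => (u - s) ^ (b-1) * (v - u) ^ (a-1)) s
  simp only [zero_add, sub_add_cancel] at h
  rw [← h]
  rw [← real_beta_scaled ha hb (by linarith : (0:ℝ) < v - s)]
  refine intervalIntegral.integral_congr fun x hx => ?_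
  simp only [add_sub_cancel_right]
  congr 1
  congr 1
  ring

lemma ii_rpow_sub {c : ℝ} (hc : -1 < c) (s A B : ℝ) :
    IntervalIntegrable (fun u => (u - s) ^ c) volume A B := by
  simpa using
    (intervalIntegral.intervalIntegrable_rpow' (a := A - s) (b := B - s) hc).comp_sub_right s

lemma ii_mul {α c u t : ℝ} (hc : -1 < c) (hu : 0 < u) (hut : u ≤ t) :
    IntervalIntegrable (fun v => v ^ α * (v - u) ^ c) volume u t := by
  refine (ii_rpow_sub hc u u t).continuousOn_mul fun v hv => ?_
  rw [uIcc_of_le hut] at hv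
  exact (Real.continuousAt_rpow_const v α (Or.inl (lt_of_lt_of_le hu hv.1).ne')).continuousWithinAt

lemma inner_int_bound {α a u t : ℝ} (hα : 0 < α) (ha : 0 < a) (hu : 0 < u) (hut : u ≤ t) :
    (∫ v in u..t, v ^ α * (v - u) ^ (a - 1)) ≤ t ^ α * (t ^ a / a) := by
  have ht : 0 < t := lt_of_lt_of_le hu hut
  have h1 : (∫ v in u..t, v ^ α * (v - u) ^ (a - 1))
      ≤ ∫ v in u..t, t ^ α * (v - u) ^ (a - 1) := by
    refine intervalIntegral.integral_mono_on hut (ii_mul (by linarith) hu hut)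
      ((ii_rpow_sub (by linarith) u u t).const_mul _) fun x hx => ?_
    have hx0 : 0 < x := lt_of_lt_of_le hu hx.1
    exact mul_le_mul_of_nonneg_right (Real.rpow_le_rpow hx0.le hx.2 hα.le)
      (Real.rpow_nonneg (by linarith [hx.1]) _)
  have h2 : (∫ v in u..t, (v - u) ^ (a - 1)) = (t - u) ^ a / a := by
    have hc := intervalIntegral.integral_comp_add_right (a := 0) (b := t - u)
      (fun v : ℝ => (v - u) ^ (a-1)) u
    simp only [zero_add, sub_add_cancel, add_sub_cancel_right] at hc
    rw [← hc, integral_rpow (Or.inl (by linarith)), sub_add_cancel,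
      Real.zero_rpow ha.ne', sub_zero]
  have h3 : (t - u) ^ a ≤ t ^ a := Real.rpow_le_rpow (by linarith) (by linarith) ha.le
  calc (∫ v in u..t, v ^ α * (v - u) ^ (a - 1))
      ≤ ∫ v in u..t, t ^ α * (v - u) ^ (a - 1) := h1
    _ = t ^ α * ((t - u) ^ a / a) := by rw [intervalIntegral.integral_const_mul, h2]
    _ ≤ t ^ α * (t ^ a / a) := by
        have := Real.rpow_nonneg ht.le α
        gcongr

lemma core {α a s t : ℝ} (hα : 0 < α) (ha : 0 < a) (hs : 0 < s) (hst : s < t) :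
    ∫ u in s..t, (∫ v in u..t, v ^ α * (v - u) ^ (a - 1)) * (u - s) ^ (α - 1)
      = (Real.Gamma α * Real.Gamma a / Real.Gamma (a + α)) *
        ∫ v in s..t, v ^ α * (v - s) ^ (a + α - 1) := by
  set B := Real.Gamma α * Real.Gamma a / Real.Gamma (a + α) with hB
  set μ := volume.restrict (Ioc s t) with hμ
  set h : ℝ → ℝ → ℝ :=
    fun u v => if u < v then v ^ α * (v - u) ^ (a - 1) * (u - s) ^ (α - 1) else 0 with hh
  have ht0 : 0 < t := hs.trans hst
  have hmeas : Measurable (Function.uncurry h) := by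
    refine Measurable.ite (measurableSet_lt measurable_fst measurable_snd) ?_ measurable_const
    fun_prop
  -- pointwise description for fixed u ∈ Ioo s t
  have hind : ∀ u, h u = (Ioi u).indicator
      (fun v => v ^ α * (v - u) ^ (a - 1) * (u - s) ^ (α - 1)) := by
    intro u; funext v
    by_cases hc : u < v <;> simp [hh, indicator, hc, mem_Ioi]
  have hinter : ∀ u ∈ Ioo s t, Ioi u ∩ Ioc s t = Ioc u t := by
    intro u hu; ext x
    simp only [mem_inter_iff, mem_Ioi, mem_Ioc]
    exact ⟨fun ⟨h1, _, h3⟩ => ⟨h1, h3⟩, fun ⟨h1, h2⟩ => ⟨h1, hu.1.trans h1, h2⟩⟩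
  have hIO : ∀ u ∈ Ioo s t,
      IntegrableOn (fun v => v ^ α * (v - u) ^ (a - 1) * (u - s) ^ (α - 1)) (Ioc u t) volume := by
    intro u hu
    exact (intervalIntegrable_iff_integrableOn_Ioc_of_le hu.2.le).mp
      ((ii_mul (by linarith) (hs.trans hu.1) hu.2.le).mul_const _)
  have hInt_u : ∀ u ∈ Ioo s t, Integrable (h u) μ := by
    intro u hu
    rw [hind u, hμ, integrable_indicator_iff measurableSet_Ioi, IntegrableOn,
      Measure.restrict_restrict measurableSet_Ioi, hinter u hu]
    exact hIO u hu
  have hval_u : ∀ u ∈ Ioo s t, ∫ v, h u v ∂μ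
      = (∫ v in u..t, v ^ α * (v - u) ^ (a - 1)) * (u - s) ^ (α - 1) := by
    intro u hu
    rw [hind u, hμ, integral_indicator measurableSet_Ioi,
      Measure.restrict_restrict measurableSet_Ioi, hinter u hu,
      ← intervalIntegral.integral_of_le hu.2.le, intervalIntegral.integral_mul_const]
  have hnn : ∀ u v, s < u → 0 ≤ h u v := by
    intro u v hu
    rw [hh]
    dsimp only
    split
    · next hc =>
      have h1 : (0:ℝ) ≤ v := by linarith [hs.trans hu, hc]
      exact mul_nonneg (mul_nonneg (Real.rpow_nonneg h1 _)
        (Real.rpow_nonneg (by linarith) _)) (Real.rpow_nonneg (by linarith [hs.trans hu]) _)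
    · exact le_rfl
  have hae : ∀ᵐ u ∂μ, u ∈ Ioo s t := by
    have h1 : ∀ᵐ (u : ℝ) ∂volume, u ≠ t := by
      rw [ae_iff]
      have hset : {u : ℝ | ¬ u ≠ t} = {t} := by ext u; simp
      rw [hset]
      exact Real.volume_singleton
    filter_upwards [ae_restrict_of_ae h1, ae_restrict_mem measurableSet_Ioc] with u h1 h2
    exact ⟨h2.1, lt_of_le_of_ne h2.2 h1⟩
  have hbd : ∀ u ∈ Ioo s t, (∫ v, ‖h u v‖ ∂μ) ≤ t ^ α * (t ^ a / a) * (u - s) ^ (α - 1) := by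
    intro u hu
    have : (∫ v, ‖h u v‖ ∂μ) = ∫ v, h u v ∂μ := by
      refine integral_congr_ae (Eventually.of_forall fun v => ?_)
      exact norm_of_nonneg (hnn u v hu.1)
    rw [this, hval_u u hu]
    exact mul_le_mul_of_nonneg_right
      (inner_int_bound hα ha (hs.trans hu.1) hu.2.le)
      (Real.rpow_nonneg (by linarith [hu.1]) _)
  have hint : Integrable (Function.uncurry h) (μ.prod μ) := by
    rw [integrable_prod_iff hmeas.aestronglyMeasurable]
    constructor
    · filter_upwards [hae] with u hu
      exact hInt_u u hu
    · refine Integrable.mono'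
        (g := fun u => t ^ α * (t ^ a / a) * (u - s) ^ (α - 1)) ?_ ?_ ?_
      · rw [hμ]
        exact (intervalIntegrable_iff_integrableOn_Ioc_of_le hst.le).mp
          ((ii_rpow_sub (by linarith) s s t).const_mul _)
      · exact (hmeas.aestronglyMeasurable.norm).integral_prod_right'
      · filter_upwards [hae] with u hu
        rw [norm_of_nonneg (integral_nonneg fun v => norm_nonneg _)]
        exact hbd u hu
  -- inner integral in u, for fixed v
  have hind' : ∀ v, (fun u => h u v) = (Iio v).indicator
      (fun u => v ^ α * (v - u) ^ (a - 1) * (u - s) ^ (α - 1)) := by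
    intro v; funext u
    by_cases hc : u < v <;> simp [hh, indicator, hc, mem_Iio]
  have hinter' : ∀ v ∈ Ioc s t, Iio v ∩ Ioc s t = Ioo s v := by
    intro v hv; ext x
    simp only [mem_inter_iff, mem_Iio, mem_Ioc, mem_Ioo]
    exact ⟨fun ⟨h1, h2, _⟩ => ⟨h2, h1⟩, fun ⟨h1, h2⟩ => ⟨h2, h1, h2.le.trans hv.2⟩⟩
  have hval_v : ∀ v ∈ Ioc s t, (∫ u, h u v ∂μ) = v ^ α * (v - s) ^ (a + α - 1) * B := by
    intro v hv
    rw [hind' v, hμ, integral_indicator measurableSet_Iio,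
      Measure.restrict_restrict measurableSet_Iio, hinter' v hv,
      Measure.restrict_congr_set Ioo_ae_eq_Ioc,
      ← intervalIntegral.integral_of_le hv.1.le]
    have : (∫ u in s..v, v ^ α * (v - u) ^ (a - 1) * (u - s) ^ (α - 1))
        = v ^ α * ∫ u in s..v, (u - s) ^ (α - 1) * (v - u) ^ (a - 1) := by
      rw [← intervalIntegral.integral_const_mul]
      exact intervalIntegral.integral_congr fun x _ => by ring
    rw [this, real_beta_shift ha hα hv.1]
    ring
  -- put everything together
  have swap := integral_integral_swap hint
  calc (∫ u in s..t, (∫ v in u..t, v ^ α * (v - u) ^ (a - 1)) * (u - s) ^ (α - 1))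
      = ∫ u, (∫ v, h u v ∂μ) ∂μ := by
        rw [intervalIntegral.integral_of_le hst.le]
        refine integral_congr_ae ?_
        filter_upwards [hae] with u hu
        rw [hval_u u hu]
    _ = ∫ v, (∫ u, h u v ∂μ) ∂μ := swap
    _ = ∫ v, v ^ α * (v - s) ^ (a + α - 1) * B ∂μ := by
        refine integral_congr_ae ?_
        filter_upwards [ae_restrict_mem measurableSet_Ioc] with v hv
        exact hval_v v hv
    _ = B * ∫ v in s..t, v ^ α * (v - s) ^ (a + α - 1) := by
        rw [intervalIntegral.integral_of_le hst.le, ← integral_const_mul]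
        exact integral_congr_ae (Eventually.of_forall fun v => by ring)

lemma ae_ne_vol (c : ℝ) : ∀ᵐ u ∂(volume : Measure ℝ), u ≠ c := by
  rw [ae_iff]
  have h : {u : ℝ | ¬ u ≠ c} = {c} := by ext; simp
  rw [h]
  exact Real.volume_singleton

/-- Truncation: if `g` vanishes beyond `t`, the integral up to `T` equals that up to `t`. -/
lemma trunc_int (g : ℝ → ℝ) {s t T : ℝ} (hst : s ≤ t) (htT : t ≤ T)
    (hg : ∀ u, t < u → g u = 0) :
    ∫ u in s..T, g u = ∫ u in s..t, g u := by
  rw [intervalIntegral.integral_of_le (hst.trans htT), intervalIntegral.integral_of_le hst]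
  calc ∫ u in Ioc s T, g u
      = ∫ u in Ioc s T, (Ioc s t).indicator g u := by
        refine setIntegral_congr_fun measurableSet_Ioc fun u hu => ?_
        by_cases h : u ∈ Ioc s t
        · rw [indicator_of_mem h]
        · rw [indicator_of_notMem h, hg u ?_]
          simp only [mem_Ioc, not_and, not_le] at h
          exact h hu.1
    _ = ∫ u in Ioc s t, g u ∂(volume.restrict (Ioc s T)) :=
        integral_indicator measurableSet_Ioc
    _ = ∫ u in Ioc s t ∩ Ioc s T, g u := by
        rw [Measure.restrict_restrict measurableSet_Ioc]
    _ = ∫ u in Ioc s t, g u := by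
        rw [inter_eq_self_of_subset_left (Ioc_subset_Ioc_right htT)]

/-- The functions `γ_k(t,s)` appearing in the Liouville–Neumann series of the
inverse kernel; with `α = H − 1/2`,
`γ_k(t,s) = (c(H)^k Γ(α)^k / Γ(kα)) · s^{−α} · ∫_s^t u^{α}(u−s)^{kα−1} du`
for `0 < s < t`, and `γ_k(t,s) = 0` for `s ≥ t`. -/
noncomputable def gam (H : ℝ) (k : ℕ) (t s : ℝ) : ℝ :=
  if s < t then
    cH H ^ k * Real.Gamma (H - 1/2) ^ k / Real.Gamma (k * (H - 1/2)) *
      (s ^ (-(H - 1/2)) * ∫ u in s..t, u ^ (H - 1/2) * (u - s) ^ ((k : ℝ) * (H - 1/2) - 1))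
  else 0

/-- The `k`-fold iterate of `K*_H` applied to the indicator `1_{[0,t)}` is `γ_k(t,·)`:
for `k ≥ 1` and `0 < s < t ≤ T`, `((K*_H)^k 1_{[0,t)})(s) = γ_k(t,s)`.
In particular `γ_1(t,s) = K_H(t,s)`. -/
theorem Kstar_iterate_indicator (H T t : ℝ) (hH : H ∈ Set.Ioo (1/2 : ℝ) 1)
    (hT : 0 < T) (ht : 0 < t) (htT : t ≤ T) :
    (∀ k : ℕ, 1 ≤ k → ∀ s : ℝ, 0 < s → s < t →
        (Kstar H T)^[k] ((Set.Ico (0:ℝ) t).indicator fun _ => (1:ℝ)) s = gam H k t s) ∧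
    (∀ s : ℝ, 0 < s → s < t → gam H 1 t s = KH H t s) := by
  obtain ⟨hH1, hH2⟩ := hH
  have hα : 0 < H - 1/2 := by linarith
  have hΓα : Real.Gamma (H - 1/2) ≠ 0 := (Real.Gamma_pos_of_pos hα).ne'
  set ind : ℝ → ℝ := (Set.Ico (0:ℝ) t).indicator (fun _ => (1:ℝ)) with hind
  -- iterates vanish at and beyond t
  have hvan : ∀ k : ℕ, ∀ s : ℝ, t ≤ s → (Kstar H T)^[k] ind s = 0 := by
    intro k
    induction k with
    | zero =>
      intro s hs
      simp only [Function.iterate_zero, id_eq, hind]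
      exact indicator_of_notMem (fun hmem => absurd hmem.2 (not_lt.mpr hs)) _
    | succ k ihk =>
      intro s hs
      rw [Function.iterate_succ_apply']
      simp only [Kstar]
      rw [intervalIntegral.integral_congr (g := fun _ => (0:ℝ)) ?_]
      · rw [intervalIntegral.integral_zero, mul_zero]
      · intro u hu
        have hu' : t ≤ u := by
          rcases le_total s T with h | h
          · rw [uIcc_of_le h] at hu; exact hs.trans hu.1
          · rw [uIcc_of_ge h] at hu; exact htT.trans hu.1
        simp only [ihk u hu', zero_mul]
  -- the base-case integral identity
  have hbase : ∀ s : ℝ, 0 < s → s < t →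
      Kstar H T ind s
        = cH H * (s ^ (-(H - 1/2)) *
            ∫ u in s..t, u ^ (H - 1/2) * (u - s) ^ (H - 3/2)) := by
    intro s hs hst
    simp only [Kstar]
    rw [trunc_int _ hst.le htT (fun u hu => by
      have : ind u = 0 :=
        indicator_of_notMem (fun hmem => absurd hmem.2 (not_lt.mpr hu.le)) _
      simp [this])]
    rw [intervalIntegral.integral_congr_ae (g := fun u => u ^ (H - 1/2) * (u - s) ^ (H - 3/2)) ?_]
    · ring
    · filter_upwards [ae_ne_vol t] with u hu hmem
      rw [uIoc_of_le hst.le] at hmem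
      have hmemI : u ∈ Ico (0:ℝ) t := ⟨by linarith [hmem.1], lt_of_le_of_ne hmem.2 hu⟩
      have : ind u = 1 := indicator_of_mem hmemI _
      rw [this]; ring
  constructor
  · intro k hk
    induction k, hk using Nat.le_induction with
    | base =>
      intro s hs hst
      rw [Function.iterate_one, hbase s hs hst, gam, if_pos hst]
      simp only [pow_one, Nat.cast_one, one_mul]
      rw [show (H - 1/2 - 1 : ℝ) = H - 3/2 by ring, mul_div_assoc, div_self hΓα, mul_one]
    | succ k hk1 ih =>
      intro s hs hst
      have hk0 : (0:ℝ) < (k:ℝ) * (H - 1/2) :=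
        mul_pos (by exact_mod_cast Nat.lt_of_lt_of_le Nat.zero_lt_one hk1) hα
      have hΓk : Real.Gamma ((k:ℝ) * (H - 1/2)) ≠ 0 := (Real.Gamma_pos_of_pos hk0).ne'
      have hΓk1 : Real.Gamma (((k:ℕ) + 1 : ℕ) * (H - 1/2) : ℝ) ≠ 0 := by
        refine (Real.Gamma_pos_of_pos ?_).ne'
        have : (0:ℝ) < ((k:ℕ) + 1 : ℕ) := by positivity
        positivity
      rw [Function.iterate_succ_apply']
      simp only [Kstar]
      -- replace iterate by gam inside the integral
      rw [intervalIntegral.integral_congr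
        (g := fun u => gam H k t u * u ^ (H - 1/2) * (u - s) ^ (H - 3/2)) (fun u hu => by
          rw [uIcc_of_le (hst.le.trans htT)] at hu
          beta_reduce
          rcases lt_or_ge u t with h | h
          · rw [ih u (lt_of_lt_of_le hs hu.1) h]
          · rw [hvan k u h, gam, if_neg (not_lt.mpr h)])]
      -- truncate the integral at t
      rw [trunc_int _ hst.le htT (fun u hu => by
        rw [gam, if_neg (not_lt.mpr hu.le)]; ring)]
      -- rewrite the integrand on (s,t) using gam's formula
      set Ck : ℝ := cH H ^ k * Real.Gamma (H - 1/2) ^ k / Real.Gamma ((k:ℝ) * (H - 1/2))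
        with hCk
      rw [intervalIntegral.integral_congr_ae
        (g := fun u => Ck * ((∫ v in u..t, v ^ (H - 1/2) * (v - u) ^ ((k:ℝ) * (H - 1/2) - 1))
          * (u - s) ^ ((H - 1/2) - 1))) ?_]
      · rw [intervalIntegral.integral_const_mul,
          core hα hk0 hs hst]
        rw [gam, if_pos hst]
        rw [show ((k:ℕ) + 1 : ℕ) * (H - 1/2) - 1 = ((k:ℝ) * (H - 1/2) + (H - 1/2)) - 1 by
          push_cast; ring]
        rw [hCk]
        rw [show ((k:ℝ) * (H - 1/2) + (H - 1/2)) = (((k:ℕ) + 1 : ℕ) * (H - 1/2) : ℝ) by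
          push_cast; ring]
        have hgen : ∀ J : ℝ, cH H * s ^ (-(H - 1/2)) *
              (cH H ^ k * Real.Gamma (H - 1/2) ^ k / Real.Gamma ((k:ℝ) * (H - 1/2)) *
                (Real.Gamma (H - 1/2) * Real.Gamma ((k:ℝ) * (H - 1/2)) /
                  Real.Gamma ((((k:ℕ) + 1 : ℕ) : ℝ) * (H - 1/2)) * J)) =
            cH H ^ (k + 1) * Real.Gamma (H - 1/2) ^ (k + 1) /
              Real.Gamma ((((k:ℕ) + 1 : ℕ) : ℝ) * (H - 1/2)) * (s ^ (-(H - 1/2)) * J) := by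
          intro J
          calc cH H * s ^ (-(H - 1/2)) *
              (cH H ^ k * Real.Gamma (H - 1/2) ^ k / Real.Gamma ((k:ℝ) * (H - 1/2)) *
                (Real.Gamma (H - 1/2) * Real.Gamma ((k:ℝ) * (H - 1/2)) /
                  Real.Gamma ((((k:ℕ) + 1 : ℕ) : ℝ) * (H - 1/2)) * J))
              = cH H ^ (k + 1) * Real.Gamma (H - 1/2) ^ (k + 1) /
                  Real.Gamma ((((k:ℕ) + 1 : ℕ) : ℝ) * (H - 1/2)) * (s ^ (-(H - 1/2)) * J) *
                  (Real.Gamma ((k:ℝ) * (H - 1/2)) * (Real.Gamma ((k:ℝ) * (H - 1/2)))⁻¹) := by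
                ring
            _ = cH H ^ (k + 1) * Real.Gamma (H - 1/2) ^ (k + 1) /
                  Real.Gamma ((((k:ℕ) + 1 : ℕ) : ℝ) * (H - 1/2)) *
                  (s ^ (-(H - 1/2)) * J) := by
                rw [mul_inv_cancel₀ hΓk, mul_one]
        exact hgen _
      · filter_upwards [ae_ne_vol t] with u hu hmem
        rw [uIoc_of_le hst.le] at hmem
        have hu0 : 0 < u := hs.trans hmem.1
        have hut : u < t := lt_of_le_of_ne hmem.2 hu
        rw [gam, if_pos hut]
        have hpow : u ^ (-(H - 1/2)) * u ^ (H - 1/2) = 1 := by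
          rw [← Real.rpow_add hu0]; simp
        rw [show (H - 3/2 : ℝ) = (H - 1/2) - 1 by ring]
        calc cH H ^ k * Real.Gamma (H - 1/2) ^ k / Real.Gamma ((k:ℝ) * (H - 1/2)) *
              (u ^ (-(H - 1/2)) * ∫ v in u..t, v ^ (H - 1/2) * (v - u) ^ ((k:ℝ) * (H - 1/2) - 1))
              * u ^ (H - 1/2) * (u - s) ^ ((H - 1/2) - 1)
            = Ck * ((∫ v in u..t, v ^ (H - 1/2) * (v - u) ^ ((k:ℝ) * (H - 1/2) - 1))
                * (u - s) ^ ((H - 1/2) - 1)) * (u ^ (-(H - 1/2)) * u ^ (H - 1/2)) := by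
              rw [hCk]; ring
          _ = _ := by rw [hpow, mul_one]
  · intro s hs hst
    rw [gam, if_pos hst, KH, if_pos hst]
    simp only [pow_one, Nat.cast_one, one_mul]
    rw [show (H - 1/2 - 1 : ℝ) = H - 3/2 by ring, mul_div_assoc, div_self hΓα, mul_one]
    ring
end

section
/- Let H ∈ (1/2,1) and α = H − 1/2. For every k ≥ 1 and 0 < s < t, γ_k(t,s) ≤ ((c(H)·Γ(α))^k / Γ(kα+1)) · (t/s)^{α} · (t−s)^{kα}. In particular, for every 0 < ε ≤ T the bounds are summable in k uniformly over s ∈ [ε, T]. -/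
open MeasureTheory Real Set Filter

private lemma gamma_conv {a y : ℝ} (ha : 0 < a) (ha1 : a < 1) (hy : 0 < y) :
    y * Real.Gamma y ≤ Real.Gamma (y + a) * (y + a) ^ (1 - a) := by
  have hya : (0:ℝ) < y + a := by linarith
  have hc := Real.convexOn_log_Gamma
  have hmem1 : (y + a) ∈ Set.Ioi (0:ℝ) := hya
  have hmem2 : (y + a + 1) ∈ Set.Ioi (0:ℝ) := by simp only [Set.mem_Ioi]; linarith
  have key := hc.2 hmem1 hmem2 ha.le (by linarith : (0:ℝ) ≤ 1 - a) (by ring)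
  have harg : a • (y + a) + (1 - a) • (y + a + 1) = y + 1 := by
    simp only [smul_eq_mul]; ring
  rw [harg] at key
  simp only [Function.comp_apply, smul_eq_mul] at key
  have hG1 : (0:ℝ) < Real.Gamma (y + 1) := Real.Gamma_pos_of_pos (by linarith)
  have hGa : (0:ℝ) < Real.Gamma (y + a) := Real.Gamma_pos_of_pos hya
  have hGa1 : Real.Gamma (y + a + 1) = (y + a) * Real.Gamma (y + a) :=
    Real.Gamma_add_one hya.ne'
  have hrhs : a * Real.log (Real.Gamma (y + a)) + (1 - a) * Real.log (Real.Gamma (y + a + 1))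
      = Real.log (Real.Gamma (y + a) * (y + a) ^ (1 - a)) := by
    rw [hGa1, Real.log_mul hya.ne' hGa.ne', Real.log_mul hGa.ne'
      (Real.rpow_pos_of_pos hya (1 - a)).ne', Real.log_rpow hya]
    ring
  rw [hrhs] at key
  have := Real.exp_le_exp.mpr key
  rw [Real.exp_log hG1, Real.exp_log (by positivity)] at this
  calc y * Real.Gamma y = Real.Gamma (y + 1) := (Real.Gamma_add_one hy.ne').symm
    _ ≤ _ := this

/-- Bound for the summands `γ_k`: with `α = H − 1/2`,
`γ_k(t,s) ≤ ((c(H)Γ(α))^k / Γ(kα+1)) · (t/s)^α · (t−s)^{kα}` for `k ≥ 1`, `0 < s < t`.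
In particular, for every `0 < ε ≤ t` the bounds, maximized over `s ∈ [ε,t]`,
are summable in `k`. -/
theorem gam_bound_and_summable (H : ℝ) (hH : H ∈ Set.Ioo (1/2 : ℝ) 1) :
    (∀ k : ℕ, 1 ≤ k → ∀ s t : ℝ, 0 < s → s < t →
        gam H k t s ≤ (cH H * Real.Gamma (H - 1/2)) ^ k / Real.Gamma ((k : ℝ) * (H - 1/2) + 1)
          * (t/s) ^ (H - 1/2) * (t - s) ^ ((k : ℝ) * (H - 1/2))) ∧
    (∀ t ε : ℝ, 0 < ε → ε ≤ t →
        Summable (fun k : ℕ =>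
          (cH H * Real.Gamma (H - 1/2)) ^ (k+1) / Real.Gamma (((k:ℝ)+1) * (H - 1/2) + 1)
            * (t/ε) ^ (H - 1/2) * (t - ε) ^ (((k:ℝ)+1) * (H - 1/2)))) := by
  obtain ⟨hH1, hH2⟩ := hH
  set α := H - 1/2 with hα_def
  have hα : 0 < α := by simp only [hα_def]; linarith
  have hα1 : α < 1/2 := by simp only [hα_def]; linarith
  have hc : 0 < cH H := by
    apply mul_pos _ hα
    apply Real.sqrt_pos.mpr
    apply div_pos (mul_pos (by linarith) (Real.Gamma_pos_of_pos (by linarith)))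
      (mul_pos (Real.Gamma_pos_of_pos (by linarith)) (Real.Gamma_pos_of_pos (by linarith)))
  have hΓα : 0 < Real.Gamma α := Real.Gamma_pos_of_pos hα
  constructor
  · intro k hk s t hs hst
    have ht : 0 < t := hs.trans hst
    have hkα : 0 < (k:ℝ) * α := mul_pos (by exact_mod_cast hk) hα
    have hΓkα : 0 < Real.Gamma ((k:ℝ) * α) := Real.Gamma_pos_of_pos hkα
    have hbase : IntervalIntegrable (fun u => (u - s) ^ ((k:ℝ) * α - 1)) volume s t := by
      have := (intervalIntegral.intervalIntegrable_rpow' (by linarith : (-1:ℝ) < (k:ℝ) * α - 1)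
        (a := 0) (b := t - s)).comp_sub_right s
      simpa using this
    have hcontOn : ContinuousOn (fun u : ℝ => u ^ α) (Set.uIcc s t) :=
      continuousOn_id.rpow_const (fun x _ => Or.inr hα.le)
    have hint1 : IntervalIntegrable (fun u => u ^ α * (u - s) ^ ((k:ℝ) * α - 1)) volume s t :=
      hbase.continuousOn_mul hcontOn
    have hint2 : IntervalIntegrable (fun u => t ^ α * (u - s) ^ ((k:ℝ) * α - 1)) volume s t :=
      hbase.const_mul _
    have hmono : (∫ u in s..t, u ^ α * (u - s) ^ ((k:ℝ) * α - 1))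
        ≤ ∫ u in s..t, t ^ α * (u - s) ^ ((k:ℝ) * α - 1) := by
      apply intervalIntegral.integral_mono_on hst.le hint1 hint2
      intro x hx
      apply mul_le_mul_of_nonneg_right
      · exact Real.rpow_le_rpow (le_trans hs.le hx.1) hx.2 hα.le
      · exact Real.rpow_nonneg (by linarith [hx.1]) _
    have hval : (∫ u in s..t, t ^ α * (u - s) ^ ((k:ℝ) * α - 1))
        = t ^ α * ((t - s) ^ ((k:ℝ) * α) / ((k:ℝ) * α)) := by
      rw [intervalIntegral.integral_const_mul]
      congr 1
      have : (∫ u in s..t, (u - s) ^ ((k:ℝ) * α - 1))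
          = ∫ u in s - s..t - s, u ^ ((k:ℝ) * α - 1) :=
        intervalIntegral.integral_comp_sub_right (fun u => u ^ ((k:ℝ) * α - 1)) s
      rw [this, sub_self, integral_rpow (Or.inl (by linarith))]
      rw [Real.zero_rpow (by linarith : (k:ℝ) * α - 1 + 1 ≠ 0)]
      rw [sub_add_cancel]
      ring_nf
    have hC : (0:ℝ) ≤ cH H ^ k * Real.Gamma α ^ k / Real.Gamma ((k:ℝ) * α) := by positivity
    have hstep : gam H k t s ≤ cH H ^ k * Real.Gamma α ^ k / Real.Gamma ((k:ℝ) * α) *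
        (s ^ (-α) * (t ^ α * ((t - s) ^ ((k:ℝ) * α) / ((k:ℝ) * α)))) := by
      rw [gam, if_pos hst]
      apply mul_le_mul_of_nonneg_left _ hC
      apply mul_le_mul_of_nonneg_left _ (Real.rpow_nonneg hs.le _)
      rw [← hval]; exact hmono
    refine le_trans hstep (le_of_eq ?_)
    rw [Real.Gamma_add_one hkα.ne', Real.div_rpow ht.le hs.le, Real.rpow_neg hs.le,
      mul_pow]
    have hsα : (0:ℝ) < s ^ α := Real.rpow_pos_of_pos hs _
    field_simp
  · intro t ε hε hεt
    set M := cH H * Real.Gamma α with hM_def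
    have hM : 0 < M := mul_pos hc hΓα
    rcases eq_or_lt_of_le hεt with rfl | hlt
    · have hz : (fun k : ℕ =>
          M ^ (k+1) / Real.Gamma (((k:ℝ)+1) * α + 1)
            * (ε/ε) ^ α * (ε - ε) ^ (((k:ℝ)+1) * α)) = fun _ => 0 := by
        funext k
        rw [sub_self, Real.zero_rpow (by positivity : (((k:ℝ)+1) * α) ≠ 0), mul_zero]
      rw [hM_def, hα_def] at hz
      rw [hz]
      exact summable_zero
    · clear_value α
      set r := t - ε with hr_def
      have hr : 0 < r := by simp only [hr_def]; linarith
      have hC : 0 < (t/ε) ^ α := Real.rpow_pos_of_pos (div_pos (by linarith) hε) _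
      set a : ℕ → ℝ := fun k =>
        M ^ (k+1) / Real.Gamma (((k:ℝ)+1) * α + 1) * (t/ε) ^ α * r ^ (((k:ℝ)+1) * α) with ha_def
      clear_value M r
      have hapos : ∀ k, 0 < a k := by
        intro k
        simp only [ha_def]
        have : (0:ℝ) < ((k:ℝ)+1) * α + 1 := by positivity
        exact mul_pos (mul_pos (div_pos (pow_pos hM _) (Real.Gamma_pos_of_pos this)) hC)
          (Real.rpow_pos_of_pos hr _)
      apply summable_of_ratio_norm_eventually_le (r := 1/2) (by norm_num)
      -- find K
      have hy_tendsto : Filter.Tendsto (fun k : ℕ => ((k:ℝ)+1) * α + 1) Filter.atTop Filter.atTop := by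
        apply Filter.tendsto_atTop_add_const_right
        apply Filter.Tendsto.atTop_mul_const hα
        exact Filter.tendsto_atTop_add_const_right _ _ tendsto_natCast_atTop_atTop
      have hB : (0:ℝ) ≤ 4 * M * r ^ α := by positivity
      have hev := hy_tendsto.eventually_ge_atTop (max 1 ((4 * M * r ^ α) ^ (α⁻¹)))
      filter_upwards [hev] with k hky
      set y := ((k:ℝ)+1) * α + 1 with hy_def
      clear_value y
      have hy1 : (1:ℝ) ≤ y := le_trans (le_max_left _ _) hky
      have hy0 : (0:ℝ) < y := by linarith
      have hyα : 4 * M * r ^ α ≤ y ^ α := by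
        calc 4 * M * r ^ α = ((4 * M * r ^ α) ^ (α⁻¹)) ^ α := by
              rw [← Real.rpow_mul hB, inv_mul_cancel₀ hα.ne', Real.rpow_one]
          _ ≤ y ^ α := Real.rpow_le_rpow (Real.rpow_nonneg hB _)
              (le_trans (le_max_right _ _) hky) hα.le
      -- Gamma bound: Γ(y+α) ≥ (y^α/2) Γ(y)
      have hGy : 0 < Real.Gamma y := Real.Gamma_pos_of_pos hy0
      have hGya : 0 < Real.Gamma (y + α) := Real.Gamma_pos_of_pos (by linarith)
      have hconv := gamma_conv hα (hα1.trans (by norm_num)) hy0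
      have hpow : (y + α) ^ (1 - α) ≤ 2 * y ^ (1 - α) := by
        calc (y + α) ^ (1 - α) ≤ (2 * y) ^ (1 - α) :=
              Real.rpow_le_rpow (by linarith) (by linarith) (by linarith)
          _ = 2 ^ (1 - α) * y ^ (1 - α) := Real.mul_rpow (by norm_num) hy0.le
          _ ≤ 2 * y ^ (1 - α) := by
              apply mul_le_mul_of_nonneg_right _ (Real.rpow_nonneg hy0.le _)
              calc (2:ℝ) ^ (1 - α) ≤ 2 ^ (1:ℝ) :=
                    Real.rpow_le_rpow_of_exponent_le (by norm_num) (by linarith)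
                _ = 2 := Real.rpow_one 2
      have hGkey : y ^ α / 2 * Real.Gamma y ≤ Real.Gamma (y + α) := by
        have h1 : y * Real.Gamma y ≤ Real.Gamma (y + α) * (2 * y ^ (1 - α)) :=
          le_trans hconv (mul_le_mul_of_nonneg_left hpow hGya.le)
        have hysplit : y = y ^ α * y ^ (1 - α) := by
          rw [← Real.rpow_add hy0, add_sub_cancel, Real.rpow_one]
        have hy1α : (0:ℝ) < y ^ (1 - α) := Real.rpow_pos_of_pos hy0 _
        rw [hysplit] at h1
        rw [div_mul_eq_mul_div, div_le_iff₀ (by norm_num : (0:ℝ) < 2)]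
        nlinarith [hGya.le, hy1α.le]
      -- main ratio bound
      have hstep : a (k+1) ≤ 1/2 * a k := by
        have hΓ1 : 0 < Real.Gamma (((k:ℝ)+1) * α + 1) := Real.Gamma_pos_of_pos (by positivity)
        have hΓ2 : 0 < Real.Gamma ((((k:ℝ)+1)+1) * α + 1) := Real.Gamma_pos_of_pos (by positivity)
        have harg2 : (((k:ℕ)+1:ℕ):ℝ) + 1 = ((k:ℝ)+1) + 1 := by push_cast; ring
        have hy2 : (((k:ℝ)+1)+1) * α + 1 = y + α := by rw [hy_def]; ring
        have hrpow : r ^ ((((k:ℝ)+1)+1) * α) = r ^ (((k:ℝ)+1) * α) * r ^ α := by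
          rw [← Real.rpow_add hr]; ring_nf
        have hMr : M * r ^ α * Real.Gamma y ≤ 1/2 * Real.Gamma (y + α) := by
          have h2 : M * r ^ α ≤ y ^ α / 4 := by
            rw [le_div_iff₀ (by norm_num : (0:ℝ) < 4)]
            linarith
          calc M * r ^ α * Real.Gamma y ≤ y ^ α / 4 * Real.Gamma y :=
                mul_le_mul_of_nonneg_right h2 hGy.le
            _ = 1/2 * (y ^ α / 2 * Real.Gamma y) := by ring
            _ ≤ 1/2 * Real.Gamma (y + α) := by linarith [hGkey]
        -- expand a (k+1) and a k
        simp only [ha_def, harg2, hy2, hrpow]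
        have hyeq : ((k:ℝ)+1) * α + 1 = y := hy_def.symm
        rw [hyeq]
        have expand : M ^ (k+1+1) / Real.Gamma (y + α) * (t/ε) ^ α *
            (r ^ (((k:ℝ)+1) * α) * r ^ α)
            = (M ^ (k+1) / Real.Gamma y * (t/ε) ^ α * r ^ (((k:ℝ)+1) * α)) *
              (M * r ^ α * Real.Gamma y / Real.Gamma (y + α)) := by
          field_simp
          ring
        rw [expand]
        have hak : 0 < M ^ (k+1) / Real.Gamma y * (t/ε) ^ α * r ^ (((k:ℝ)+1) * α) := by
          exact mul_pos (mul_pos (div_pos (pow_pos hM _) hGy) hC) (Real.rpow_pos_of_pos hr _)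
        calc _ ≤ (M ^ (k+1) / Real.Gamma y * (t/ε) ^ α * r ^ (((k:ℝ)+1) * α)) *
              (1/2 * Real.Gamma (y + α) / Real.Gamma (y + α)) := by
              apply mul_le_mul_of_nonneg_left _ hak.le
              gcongr
          _ = 1/2 * (M ^ (k+1) / Real.Gamma y * (t/ε) ^ α * r ^ (((k:ℝ)+1) * α)) := by
              field_simp
      calc ‖a (k+1)‖ = a (k+1) := Real.norm_of_nonneg (hapos _).le
        _ ≤ 1/2 * a k := hstep
        _ = 1/2 * ‖a k‖ := by rw [Real.norm_of_nonneg (hapos k).le]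
end

section
/- Let H ∈ (1/2,1), T > 0, a, b ∈ ℝ with a ≠ 0, and fix t ∈ (0,T]. Then for every ε ∈ (0,t), the series ∑_{k=1}^∞ (−1)^k (b/a)^k γ_k(t,s) converges uniformly for s ∈ [ε, t], and the series also converges in L²([0,T]) (as a function of s, with γ_k(t,s) = 0 for s ≥ t). -/
open MeasureTheory Real Set Filter

/-! For `0 < s < t`, bounding `u^α ≤ t^α` and `(t - s)^{kα} ≤ t^{kα}` in the integral gives
`|γ_k(t,s)| ≤ C^k / Γ(kα + 1) · t^α s^{-α}` with `C = |c(H)| Γ(α) t^α`. Log-convexity of `Γ`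
yields Gautschi's inequality `Γ(y + 1 - α) y^α ≤ Γ(y + 1)`, so consecutive ratios of
`C^k / Γ(kα + 1)` tend to `0` and the series is dominated by a summable sequence times `s^{-α}`.
As `s^{-α}` is bounded on `[ε, t]` and lies in `L²(0, T)` (because `2α < 1`), the tails of the
series tend to `0` uniformly on `[ε, t]` and in `L²`. -/

open scoped ENNReal Topology
open Finset (range)

namespace Real

lemma Gamma_add_one_sub_mul_rpow_le_Gamma_add_one {y α : ℝ} (hy : 0 < y) (hα0 : 0 < α)
    (hα1 : α < 1) : Gamma (y + 1 - α) * y ^ α ≤ Gamma (y + 1) := by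
  have hconv := Gamma_mul_add_mul_le_rpow_Gamma_mul_rpow_Gamma (s := y) (t := y + 1) hy
    (by linarith) hα0 (sub_pos.2 hα1) (add_sub_cancel α 1)
  rw [show α * y + (1 - α) * (y + 1) = y + 1 - α by ring, Gamma_add_one hy.ne'] at hconv
  have hΓ : 0 < Gamma y := Gamma_pos_of_pos hy
  calc Gamma (y + 1 - α) * y ^ α
      ≤ Gamma y ^ α * (y * Gamma y) ^ (1 - α) * y ^ α := by gcongr
    _ = (y * Gamma y) ^ α * (y * Gamma y) ^ (1 - α) := by
        rw [mul_rpow (z := α) hy.le hΓ.le]; ring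
    _ = Gamma (y + 1) := by
        rw [← rpow_add (by positivity), add_sub_cancel, rpow_one, Gamma_add_one hy.ne']

lemma summable_pow_div_Gamma_mul_add_one {α : ℝ} (hα0 : 0 < α) (hα1 : α < 1) (C : ℝ) :
    Summable fun k : ℕ => C ^ k / Gamma (k * α + 1) := by
  have hdecay : Tendsto (fun k : ℕ => |C| * ((k + 1) * α) ^ (-α)) atTop (𝓝 0) := by
    have hlin : Tendsto (fun k : ℕ => ((k : ℝ) + 1) * α) atTop atTop :=
      (tendsto_natCast_atTop_atTop.atTop_add tendsto_const_nhds).atTop_mul_const hα0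
    simpa using ((tendsto_rpow_neg_atTop hα0).comp hlin).const_mul |C|
  refine summable_of_ratio_norm_eventually_le (r := 1 / 2) (by norm_num) ?_
  filter_upwards [hdecay.eventually (ge_mem_nhds (by norm_num : (0 : ℝ) < 1 / 2))] with k hk
  set y : ℝ := (k + 1) * α
  have hy : 0 < y := by positivity
  have hΓ : 0 < Gamma (k * α + 1) := Gamma_pos_of_pos (by positivity)
  have hratio : Gamma (k * α + 1) * y ^ α ≤ Gamma ((k + 1 : ℕ) * α + 1) := by
    convert Gamma_add_one_sub_mul_rpow_le_Gamma_add_one hy hα0 hα1 using 3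
    · simp only [y]; ring
    · push_cast; ring
  have hΓ' : 0 < Gamma ((k + 1 : ℕ) * α + 1) := by positivity
  calc ‖C ^ (k + 1) / Gamma ((k + 1 : ℕ) * α + 1)‖
      = |C| ^ (k + 1) / Gamma ((k + 1 : ℕ) * α + 1) := by
        rw [norm_div, norm_pow, norm_eq_abs, norm_eq_abs, abs_of_pos hΓ']
    _ ≤ |C| ^ (k + 1) / (Gamma (k * α + 1) * y ^ α) := by gcongr
    _ = |C| * y ^ (-α) * (|C| ^ k / Gamma (k * α + 1)) := by
        rw [rpow_neg hy.le, pow_succ']; field_simp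
    _ ≤ 1 / 2 * (|C| ^ k / Gamma (k * α + 1)) := by gcongr
    _ = 1 / 2 * ‖C ^ k / Gamma (k * α + 1)‖ := by
        rw [norm_div, norm_pow, norm_eq_abs, norm_eq_abs, abs_of_pos hΓ]

end Real

lemma intervalIntegrable_sub_rpow {s t β : ℝ} (hβ : 0 < β) :
    IntervalIntegrable (fun u => (u - s) ^ (β - 1)) volume s t := by
  simpa using (intervalIntegral.intervalIntegrable_rpow' (a := 0) (b := t - s)
    (r := β - 1) (by linarith)).comp_sub_right s

lemma integral_sub_rpow {s t β : ℝ} (hβ : 0 < β) :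
    ∫ u in s..t, (u - s) ^ (β - 1) = (t - s) ^ β / β := by
  rw [intervalIntegral.integral_comp_sub_right (fun x => x ^ (β - 1)) s,
    integral_rpow (Or.inl (by linarith)), sub_self, zero_rpow (by linarith), sub_zero,
    sub_add_cancel]

lemma integral_rpow_mul_sub_rpow_nonneg_s15 {α β s t : ℝ} (hs : 0 < s) (hst : s ≤ t) :
    0 ≤ ∫ u in s..t, u ^ α * (u - s) ^ (β - 1) :=
  intervalIntegral.integral_nonneg hst fun _ hu =>
    mul_nonneg (rpow_nonneg (hs.le.trans hu.1) _) (rpow_nonneg (sub_nonneg.2 hu.1) _)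

lemma integral_rpow_mul_sub_rpow_le_s15 {α β s t : ℝ} (hα : 0 ≤ α) (hβ : 0 < β) (hs : 0 < s)
    (hst : s ≤ t) :
    ∫ u in s..t, u ^ α * (u - s) ^ (β - 1) ≤ t ^ α * ((t - s) ^ β / β) := by
  rw [← integral_sub_rpow hβ, ← intervalIntegral.integral_const_mul]
  refine intervalIntegral.integral_mono_on hst
    ((intervalIntegrable_sub_rpow hβ).continuousOn_mul
      (continuousOn_id.rpow_const fun _ _ => Or.inr hα))
    ((intervalIntegrable_sub_rpow hβ).const_mul _) fun u hu =>
    mul_le_mul_of_nonneg_right (rpow_le_rpow (hs.le.trans hu.1) hu.2 hα)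
      (rpow_nonneg (sub_nonneg.2 hu.1) _)

lemma gam_of_le {H t s : ℝ} (k : ℕ) (hts : t ≤ s) : gam H k t s = 0 :=
  if_neg (not_lt.2 hts)

lemma abs_gam_le {H t s : ℝ} (hH : 1 / 2 < H) {k : ℕ} (hk : k ≠ 0) (hs : 0 < s) (hst : s < t) :
    |gam H k t s| ≤ (|cH H| * Gamma (H - 1/2) * t ^ (H - 1/2)) ^ k /
      Gamma (k * (H - 1/2) + 1) * t ^ (H - 1/2) * s ^ (-(H - 1/2)) := by
  set α := H - 1/2
  set β := k * α
  set I := ∫ u in s..t, u ^ α * (u - s) ^ (β - 1)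
  have hα : 0 < α := sub_pos.2 hH
  have hβ : 0 < β := by positivity
  have ht : 0 < t := hs.trans hst
  have hΓα : 0 < Gamma α := Gamma_pos_of_pos hα
  have hΓβ : 0 < Gamma β := Gamma_pos_of_pos hβ
  have hI : 0 ≤ I := integral_rpow_mul_sub_rpow_nonneg_s15 hs hst.le
  calc |gam H k t s| = |cH H| ^ k * Gamma α ^ k / Gamma β * (s ^ (-α) * I) := by
        rw [gam, if_pos hst, abs_mul, abs_div, abs_mul, abs_pow, abs_pow, abs_of_pos hΓα,
          abs_of_pos hΓβ, abs_mul, abs_of_pos (rpow_pos_of_pos hs _), abs_of_nonneg hI]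
    _ ≤ |cH H| ^ k * Gamma α ^ k / Gamma β * (s ^ (-α) * (t ^ α * (t ^ β / β))) := by
        gcongr
        refine (integral_rpow_mul_sub_rpow_le_s15 hα.le hβ hs hst.le).trans ?_
        gcongr
        linarith
    _ = _ := by
        rw [Gamma_add_one hβ.ne', show t ^ β = (t ^ α) ^ k by
          rw [← rpow_natCast, ← rpow_mul ht.le, mul_comm]]
        field_simp
        ring

lemma abs_neg_one_pow_mul_pow_mul_gam_le {H t : ℝ} (hH : 1 / 2 < H) (ht : 0 < t) (q : ℝ) (k : ℕ)
    {s : ℝ} (hs : 0 < s) :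
    |(-1) ^ (k + 1) * q ^ (k + 1) * gam H (k + 1) t s| ≤
      (|q| * |cH H| * Gamma (H - 1/2) * t ^ (H - 1/2)) ^ (k + 1) /
        Gamma ((k + 1 : ℕ) * (H - 1/2) + 1) * t ^ (H - 1/2) * s ^ (-(H - 1/2)) := by
  rcases lt_or_ge s t with hst | hts
  · calc |(-1) ^ (k + 1) * q ^ (k + 1) * gam H (k + 1) t s|
        = |q| ^ (k + 1) * |gam H (k + 1) t s| := by simp [abs_mul]
      _ ≤ |q| ^ (k + 1) * ((|cH H| * Gamma (H - 1/2) * t ^ (H - 1/2)) ^ (k + 1) /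
            Gamma ((k + 1 : ℕ) * (H - 1/2) + 1) * t ^ (H - 1/2) * s ^ (-(H - 1/2))) := by
          gcongr
          exact abs_gam_le hH k.succ_ne_zero hs hst
      _ = _ := by rw [mul_assoc |q|, mul_assoc |q|, mul_pow]; ring
  · have hα : 0 < H - 1/2 := sub_pos.2 hH
    rw [gam_of_le _ hts, mul_zero, abs_zero]
    positivity

lemma norm_sum_range_sub_tsum_le {E : Type*} [NormedAddCommGroup E] [CompleteSpace E]
    {f : ℕ → E} {M : ℕ → ℝ} (hM : Summable M) (hf : ∀ k, ‖f k‖ ≤ M k) (n : ℕ) :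
    ‖∑ k ∈ range n, f k - ∑' k, f k‖ ≤ ∑' k, M (k + n) := by
  rw [← (hM.of_norm_bounded hf).sum_add_tsum_nat_add n, sub_add_cancel_left, norm_neg]
  exact tsum_of_norm_bounded ((summable_nat_add_iff n).2 hM).hasSum fun k => hf (k + n)

lemma tendsto_eLpNorm_of_norm_le_mul {α E ι : Type*} [MeasurableSpace α] {μ : Measure α}
    [NormedAddCommGroup E] {p : ℝ≥0∞} {l : Filter ι} {F : ι → α → E} {φ : α → ℝ} {c : ι → ℝ}
    (hφ : MemLp φ p μ) (hc : Tendsto c l (𝓝 0)) (hF : ∀ i, ∀ᵐ x ∂μ, ‖F i x‖ ≤ c i * φ x) :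
    Tendsto (fun i => eLpNorm (F i) p μ) l (𝓝 0) := by
  have hlim : Tendsto (fun i => ‖c i‖ₑ * eLpNorm φ p μ) l (𝓝 0) := by
    simpa using ENNReal.Tendsto.mul_const hc.enorm (Or.inr hφ.eLpNorm_ne_top)
  refine tendsto_of_tendsto_of_tendsto_of_le_of_le tendsto_const_nhds hlim (fun _ => bot_le)
    fun i => ?_
  calc eLpNorm (F i) p μ ≤ eLpNorm (c i • φ) p μ := eLpNorm_mono_ae_real (hF i)
    _ = ‖c i‖ₑ * eLpNorm φ p μ := eLpNorm_const_smul _ _ _ _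

lemma memLp_rpow_neg_restrict_Ioc {r T : ℝ} {p : ℝ≥0∞} (hp0 : p ≠ 0) (hp : p ≠ ∞)
    (hr : r * p.toReal < 1) : MemLp (fun s : ℝ => s ^ (-r)) p (volume.restrict (Ioc 0 T)) := by
  refine (integrable_norm_rpow_iff (measurable_id.pow_const _).aestronglyMeasurable hp0 hp).1
    ((intervalIntegral.intervalIntegrable_rpow' (a := 0) (b := T)
    (r := -(r * p.toReal)) (by linarith)).1.congr_fun (fun s hs => ?_) measurableSet_Ioc)
  simp only [id, norm_of_nonneg (rpow_nonneg hs.1.le _), ← rpow_mul hs.1.le, neg_mul]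

theorem series_gam_converges_general (H T a b t : ℝ) (hH : H ∈ Set.Ioo (1/2 : ℝ) 1)
    (ht : t ∈ Set.Ioc (0:ℝ) T) :
    ∃ g : ℝ → ℝ,
      (∀ ε : ℝ, ε ∈ Set.Ioo (0:ℝ) t →
        TendstoUniformlyOn
          (fun n s => ∑ k ∈ Finset.range n, (-1:ℝ)^(k+1) * (b/a)^(k+1) * gam H (k+1) t s)
          g Filter.atTop (Set.Icc ε t)) ∧
      Filter.Tendsto
        (fun n => eLpNorm
          (fun s => (∑ k ∈ Finset.range n, (-1:ℝ)^(k+1) * (b/a)^(k+1) * gam H (k+1) t s) - g s)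
          2 (volume.restrict (Set.Ioc (0:ℝ) T)))
        Filter.atTop (nhds 0) := by
  obtain ⟨ht0, -⟩ := ht
  set α := H - 1/2 with hα_def
  have hα : 0 < α := sub_pos.2 hH.1
  have hα_half : α < 1 / 2 := by linarith [hH.2]
  set M : ℕ → ℝ := fun k => (|b / a| * |cH H| * Gamma α * t ^ α) ^ (k + 1) /
    Gamma ((k + 1 : ℕ) * α + 1) * t ^ α
  have hM : Summable M := ((summable_nat_add_iff 1).2
    (summable_pow_div_Gamma_mul_add_one hα (by linarith) _)).mul_right _
  have hterm k {s} (hs : 0 < s) :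
      ‖(-1) ^ (k + 1) * (b / a) ^ (k + 1) * gam H (k + 1) t s‖ ≤ M k * s ^ (-α) :=
    abs_neg_one_pow_mul_pow_mul_gam_le hH.1 ht0 (b / a) k hs
  refine ⟨fun s => ∑' k, (-1) ^ (k + 1) * (b / a) ^ (k + 1) * gam H (k + 1) t s,
    fun ε hε => tendstoUniformlyOn_tsum_nat (hM.mul_right (ε ^ (-α))) fun k s hs => ?_, ?_⟩
  · exact (hterm k (hε.1.trans_le hs.1)).trans
      (mul_le_mul_of_nonneg_left (rpow_le_rpow_of_nonpos hε.1 hs.1 (by linarith))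
        (by positivity))
  · refine tendsto_eLpNorm_of_norm_le_mul (memLp_rpow_neg_restrict_Ioc (r := α) (T := T)
      two_ne_zero ENNReal.ofNat_ne_top (by norm_num; linarith))
      (tendsto_sum_nat_add M) fun n => ?_
    filter_upwards [ae_restrict_mem measurableSet_Ioc] with s hs
    simpa [tsum_mul_right] using
      norm_sum_range_sub_tsum_le (hM.mul_right (s ^ (-α))) (fun k => hterm k hs.1) n

/-- The series `∑_{k≥1} (−1)^k (b/a)^k γ_k(t,·)` converges uniformly on `[ε,t]` for every
`ε ∈ (0,t)`, and also converges in `L²([0,T])`. -/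
theorem series_gam_converges (H T a b t : ℝ) (hH : H ∈ Set.Ioo (1/2 : ℝ) 1) (hT : 0 < T)
    (ha : a ≠ 0) (ht : t ∈ Set.Ioc (0:ℝ) T) :
    ∃ g : ℝ → ℝ,
      (∀ ε : ℝ, ε ∈ Set.Ioo (0:ℝ) t →
        TendstoUniformlyOn
          (fun n s => ∑ k ∈ Finset.range n, (-1:ℝ)^(k+1) * (b/a)^(k+1) * gam H (k+1) t s)
          g Filter.atTop (Set.Icc ε t)) ∧
      Filter.Tendsto
        (fun n => eLpNorm
          (fun s => (∑ k ∈ Finset.range n, (-1:ℝ)^(k+1) * (b/a)^(k+1) * gam H (k+1) t s) - g s)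
          2 (volume.restrict (Set.Ioc (0:ℝ) T)))
        Filter.atTop (nhds 0) :=
  series_gam_converges_general H T a b t hH ht
end

section
/- Let H ∈ (1/2,1), T > 0, and a, b ∈ ℝ with a ≠ 0. Let K*_H be the bounded operator on L²([0,T]) given by (K*_H f)(s) = c(H)·s^{−(H−1/2)}·∫_s^T f(u)·u^{H−1/2}·(u−s)^{H−3/2} du. Then the Neumann series (1/a)·∑_{k=0}^∞ (−b/a)^k (K*_H)^k converges absolutely in operator norm, and its sum is a two-sided inverse of the bounded operator a·I + b·K*_H on L²([0,T]); in particular a·I + b·K*_H is a bounded bijection of L²([0,T]). -/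
open MeasureTheory Real Set Filter

/-!
Write `α = H - 1/2 ∈ (0, 1/2)`. Multiplying by `s ^ α` turns `K*_H` into `c(H)` times the
(unnormalised) right-sided Riemann–Liouville integral `I^α` of order `α`, applied to
`f(u) u ^ α`. These integrals compose as `I^α I^β = B(α, β) I^(α+β)` (Fubini and the Beta
integral), so by induction
`|(K*_H)^(n+1) g|(s) s ^ α ≤ c(H)^(n+1) ∏_{i<n} B(α, (i+1)α) · I^((n+1)α)(|g(u)| u ^ α)(s)`.
Once `(n+1)α ≥ 1` the kernel of `I^((n+1)α)` is bounded by a power of `T`, and `L¹ ≤ √T·L²`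
together with `s ^ (-α) ∈ L²` bounds `‖(K*_H)^(n+1)‖` by `D ∏_{i<n} c(H) T ^ α B(α, (i+1)α)`.
Since `B(α, β) → 0` as `β → ∞`, this decays faster than any geometric sequence, so the Neumann
series converges absolutely whatever `b / a` is, and telescoping shows that it inverts
`a·I + b·K*_H = a·(I - (-b/a)·K*_H)`.
-/

open scoped ENNReal Topology
open ProbabilityTheory (beta beta_pos)

section NeumannSeries

variable {𝕜 R : Type*} [Field 𝕜] [Ring R] [Algebra 𝕜 R] [TopologicalSpace R]
  [IsTopologicalRing R] [T2Space R] [ContinuousConstSMul 𝕜 R]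

theorem neumann_series_mul_eq_one {K : R} {a b : 𝕜} (ha : a ≠ 0)
    (hs : Summable fun k : ℕ => ((1 / a) * (-b / a) ^ k) • K ^ k) :
    (∑' k : ℕ, ((1 / a) * (-b / a) ^ k) • K ^ k) * (a • 1 + b • K) = 1 ∧
      (a • 1 + b • K) * ∑' k : ℕ, ((1 / a) * (-b / a) ^ k) • K ^ k = 1 := by
  set x := (-b / a) • K
  have hterm : ∀ k : ℕ, ((1 / a) * (-b / a) ^ k) • K ^ k = (1 / a) • x ^ k := fun k => by
    rw [smul_pow, smul_smul]
  have hgeom : Summable fun k : ℕ => x ^ k := by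
    simpa only [hterm, smul_smul, mul_one_div_cancel ha, one_smul] using hs.const_smul a
  have hsum : ∑' k : ℕ, ((1 / a) * (-b / a) ^ k) • K ^ k = (1 / a) • ∑' k : ℕ, x ^ k := by
    simp_rw [hterm, hgeom.tsum_const_smul]
  have hop : a • (1 : R) + b • K = a • (1 - x) := by
    rw [smul_sub, smul_smul, mul_div_cancel₀ _ ha, neg_smul, sub_neg_eq_add]
  rw [hsum, hop, smul_mul_smul_comm, smul_mul_smul_comm, one_div_mul_cancel ha,
    mul_one_div_cancel ha, one_smul, one_smul]
  exact ⟨hgeom.tsum_pow_mul_one_sub, hgeom.one_sub_mul_tsum_pow⟩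

end NeumannSeries

theorem summable_prod_range_of_tendsto_zero {b : ℕ → ℝ} (hb : Tendsto b atTop (𝓝 0)) :
    Summable fun n => ∏ i ∈ Finset.range n, b i := by
  refine summable_of_ratio_norm_eventually_le (r := 1 / 2) (by norm_num) ?_
  filter_upwards [hb.norm.eventually_le_const (by norm_num : ‖(0 : ℝ)‖ < 1 / 2)] with n hn
  rw [Finset.prod_range_succ, norm_mul, mul_comm]
  exact mul_le_mul_of_nonneg_right hn (norm_nonneg _)

theorem summable_pow_mul_norm_pow_of_le_prod {R : Type*} [NormedRing R] {K : R} {D : ℝ}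
    {b : ℕ → ℝ} (hb : Tendsto b atTop (𝓝 0))
    (hK : ∀ᶠ n in atTop, ‖K ^ (n + 1)‖ ≤ D * ∏ i ∈ Finset.range n, b i) (r : ℝ) :
    Summable fun n => r ^ n * ‖K ^ n‖ := by
  have hrb : Summable fun n => ∏ i ∈ Finset.range n, |r| * b i :=
    summable_prod_range_of_tendsto_zero (by simpa only [mul_zero] using hb.const_mul |r|)
  refine (summable_nat_add_iff 1).mp
    (Summable.of_norm_bounded_eventually_nat (hrb.mul_left (|r| * D)) ?_)
  filter_upwards [hK] with n hn
  rw [Finset.prod_mul_distrib, Finset.prod_const, Finset.card_range, norm_mul, norm_pow,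
    Real.norm_eq_abs, norm_norm, pow_succ]
  calc |r| ^ n * |r| * ‖K ^ (n + 1)‖ ≤ |r| ^ n * |r| * (D * ∏ i ∈ Finset.range n, b i) := by
        gcongr
    _ = _ := by ring

theorem lintegral_rpow_mul_one_sub_rpow {α β : ℝ} (hα : 0 < α) (hβ : 0 < β) :
    ∫⁻ x in Ioo 0 1, ENNReal.ofReal (x ^ (α - 1) * (1 - x) ^ (β - 1)) =
      ENNReal.ofReal (beta α β) := by
  have hB := beta_pos hα hβ
  have h := ProbabilityTheory.lintegral_betaPDF_eq_one hα hβ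
  rw [ProbabilityTheory.lintegral_betaPDF] at h
  simp_rw [mul_assoc, ENNReal.ofReal_mul (one_div_pos.2 hB).le] at h
  rw [lintegral_const_mul' _ _ ENNReal.ofReal_ne_top] at h
  rw [← mul_one (ENNReal.ofReal _), ← h, ← mul_assoc, ← ENNReal.ofReal_mul hB.le,
    mul_one_div_cancel hB.ne', ENNReal.ofReal_one, one_mul]

theorem tendsto_beta_atTop {α : ℝ} (hα : 0 < α) : Tendsto (beta α) atTop (𝓝 0) := by
  have hdom : ∫⁻ x in Ioo 0 1, ENNReal.ofReal (x ^ (α - 1)) ≠ ⊤ := by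
    have h := lintegral_rpow_mul_one_sub_rpow hα one_pos
    simp only [sub_self, Real.rpow_zero, mul_one] at h
    exact h ▸ ENNReal.ofReal_ne_top
  have hlim : Tendsto (fun β : ℝ =>
      ∫⁻ x in Ioo 0 1, ENNReal.ofReal (x ^ (α - 1) * (1 - x) ^ (β - 1))) atTop (𝓝 0) := by
    rw [← lintegral_zero (μ := volume.restrict (Ioo (0 : ℝ) 1))]
    refine tendsto_lintegral_filter_of_dominated_convergence _
      (Eventually.of_forall fun β => by fun_prop) ?_ hdom ?_
    · filter_upwards [eventually_ge_atTop 1] with β hβ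
      filter_upwards [ae_restrict_mem measurableSet_Ioo] with x hx
      exact ENNReal.ofReal_le_ofReal (mul_le_of_le_one_right (Real.rpow_nonneg hx.1.le _)
        (Real.rpow_le_one (by linarith [hx.2]) (by linarith [hx.1]) (by linarith)))
    · filter_upwards [ae_restrict_mem measurableSet_Ioo] with x hx
      have h := (tendsto_rpow_atTop_of_base_lt_one (1 - x) (by linarith [hx.2])
        (by linarith [hx.1])).comp (tendsto_atTop_add_const_right atTop (-1) tendsto_id)
      simpa [sub_eq_add_neg] using ENNReal.tendsto_ofReal (h.const_mul (x ^ (α - 1)))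
  refine ((ENNReal.tendsto_toReal ENNReal.zero_ne_top).comp hlim).congr' ?_
  filter_upwards [eventually_gt_atTop 0] with β hβ
  simp [lintegral_rpow_mul_one_sub_rpow hα hβ, (beta_pos hα hβ).le]

/-- `(u - s)₊ ^ (β - 1)`, the kernel of the right-sided Riemann–Liouville integral of order `β`
(without the factor `1 / Γ(β)`). -/
noncomputable def rlKernel (β s u : ℝ) : ℝ≥0∞ :=
  if s < u then ENNReal.ofReal ((u - s) ^ (β - 1)) else 0

theorem measurable_rlKernel (β : ℝ) : Measurable (Function.uncurry (rlKernel β)) :=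
  Measurable.ite (measurableSet_lt measurable_fst measurable_snd) (by fun_prop) measurable_const

theorem rlKernel_ne_top (β s u : ℝ) : rlKernel β s u ≠ ⊤ := by
  unfold rlKernel
  split_ifs <;> simp

theorem rlKernel_le_rpow {β s u T : ℝ} (hβ : 1 ≤ β) (hs : 0 ≤ s) (hu : u ≤ T) :
    rlKernel β s u ≤ ENNReal.ofReal (T ^ (β - 1)) := by
  unfold rlKernel
  split_ifs with hsu
  · exact ENNReal.ofReal_le_ofReal (Real.rpow_le_rpow (by linarith) (by linarith) (by linarith))
  · exact zero_le

theorem lintegral_rlKernel_mul_rlKernel {α β : ℝ} (hα : 0 < α) (hβ : 0 < β) (s v : ℝ) :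
    ∫⁻ u, rlKernel α s u * rlKernel β u v = ENNReal.ofReal (beta α β) * rlKernel (α + β) s v := by
  rcases le_or_gt v s with hvs | hsv
  · have hzero : ∀ u, rlKernel α s u * rlKernel β u v = 0 := fun u => by
      by_cases hsu : s < u
      · simp [rlKernel, not_lt.2 (hvs.trans hsu.le)]
      · simp [rlKernel, hsu]
    rw [lintegral_congr hzero, lintegral_zero, rlKernel, if_neg (not_lt.2 hvs), mul_zero]
  have hd : 0 < v - s := sub_pos.2 hsv
  have hprod : ∀ u, rlKernel α s u * rlKernel β u v =
      (Ioo s v).indicator (fun u => ENNReal.ofReal ((u - s) ^ (α - 1) * (v - u) ^ (β - 1))) u :=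
    fun u => by
      by_cases hu : u ∈ Ioo s v
      · simp [rlKernel, hu.1, hu.2,
          ENNReal.ofReal_mul (Real.rpow_nonneg (sub_nonneg.2 hu.1.le) _)]
      · rw [indicator_of_notMem hu]
        by_cases hsu : s < u
        · have hvu : ¬u < v := fun h => hu ⟨hsu, h⟩
          simp [rlKernel, hvu]
        · simp [rlKernel, hsu]
  have himage : (fun x => (v - s) * x + s) '' Ioo 0 1 = Ioo s v := by
    simp [image_affine_Ioo hd]
  have hderiv : ∀ x ∈ Ioo (0 : ℝ) 1,
      HasDerivWithinAt (fun x => (v - s) * x + s) (v - s) (Ioo 0 1) x := fun x _ => by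
    simpa using (((hasDerivAt_id x).const_mul (v - s)).add_const s).hasDerivWithinAt
  have hinj : InjOn (fun x => (v - s) * x + s) (Ioo 0 1) := fun x _ y _ hxy => by
    simpa [hd.ne'] using hxy
  calc ∫⁻ u, rlKernel α s u * rlKernel β u v
      = ∫⁻ u in Ioo s v, ENNReal.ofReal ((u - s) ^ (α - 1) * (v - u) ^ (β - 1)) := by
        simp_rw [hprod, lintegral_indicator measurableSet_Ioo]
    _ = ∫⁻ x in Ioo 0 1, ENNReal.ofReal ((v - s) ^ (α + β - 1)) *
          ENNReal.ofReal (x ^ (α - 1) * (1 - x) ^ (β - 1)) := by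
        rw [← himage, lintegral_image_eq_lintegral_abs_deriv_mul measurableSet_Ioo hderiv hinj]
        refine setLIntegral_congr_fun measurableSet_Ioo fun x hx => ?_
        rw [← ENNReal.ofReal_mul (abs_nonneg _), ← ENNReal.ofReal_mul (by positivity)]
        congr 1
        rw [abs_of_pos hd, show (v - s) * x + s - s = (v - s) * x by ring,
          show v - ((v - s) * x + s) = (v - s) * (1 - x) by ring,
          Real.mul_rpow hd.le hx.1.le, Real.mul_rpow hd.le (by linarith [hx.2]),
          show α + β - 1 = 1 + (α - 1) + (β - 1) by ring, Real.rpow_add hd, Real.rpow_add hd,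
          Real.rpow_one]
        ring
    _ = ENNReal.ofReal (beta α β) * rlKernel (α + β) s v := by
        rw [lintegral_const_mul' _ _ ENNReal.ofReal_ne_top,
          lintegral_rpow_mul_one_sub_rpow hα hβ, rlKernel, if_pos hsv, mul_comm]

noncomputable def rlIntegral (μ : Measure ℝ) (β : ℝ) (F : ℝ → ℝ≥0∞) (s : ℝ) : ℝ≥0∞ :=
  ∫⁻ u, rlKernel β s u * F u ∂μ

section rlIntegral

variable {μ : Measure ℝ} {β : ℝ} {F G : ℝ → ℝ≥0∞}

theorem rlIntegral_mono_ae (h : F ≤ᵐ[μ] G) (s : ℝ) :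
    rlIntegral μ β F s ≤ rlIntegral μ β G s :=
  lintegral_mono_ae (h.mono fun _ hu => mul_le_mul_right hu _)

theorem rlIntegral_const_mul {C : ℝ≥0∞} (hC : C ≠ ⊤) (s : ℝ) :
    rlIntegral μ β (fun u => C * F u) s = C * rlIntegral μ β F s := by
  simp_rw [rlIntegral, mul_left_comm _ C]
  exact lintegral_const_mul' _ _ hC

theorem rlIntegral_le_mul_lintegral {T s : ℝ} (hβ : 1 ≤ β) (hμ : ∀ᵐ u ∂μ, u ≤ T)
    (hs : 0 ≤ s) : rlIntegral μ β F s ≤ ENNReal.ofReal (T ^ (β - 1)) * ∫⁻ u, F u ∂μ := by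
  rw [← lintegral_const_mul' _ _ ENNReal.ofReal_ne_top]
  exact lintegral_mono_ae (hμ.mono fun u hu => mul_le_mul_left (rlKernel_le_rpow hβ hs hu) _)

theorem rlIntegral_rlIntegral_le [SFinite μ] (hμ : μ ≤ volume) {α : ℝ} (hα : 0 < α)
    (hβ : 0 < β) (hF : AEMeasurable F μ) (s : ℝ) :
    rlIntegral μ α (rlIntegral μ β F) s ≤ ENNReal.ofReal (beta α β) * rlIntegral μ (α + β) F s := by
  have hkα : Measurable (rlKernel α s) := (measurable_rlKernel α).of_uncurry_left
  calc rlIntegral μ α (rlIntegral μ β F) s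
      = ∫⁻ u, ∫⁻ v, rlKernel α s u * (rlKernel β u v * F v) ∂μ ∂μ := by
        refine lintegral_congr fun u => ?_
        rw [rlIntegral, lintegral_const_mul' _ _ (rlKernel_ne_top α s u)]
    _ = ∫⁻ v, (∫⁻ u, rlKernel α s u * rlKernel β u v ∂μ) * F v ∂μ := by
        rw [lintegral_lintegral_swap ((hkα.comp measurable_fst).aemeasurable.mul
          ((measurable_rlKernel β).aemeasurable.mul hF.comp_snd))]
        refine lintegral_congr fun v => ?_
        simp_rw [← mul_assoc]
        exact lintegral_mul_const _ (hkα.mul (measurable_rlKernel β).of_uncurry_right)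
    _ ≤ ∫⁻ v, (∫⁻ u, rlKernel α s u * rlKernel β u v) * F v ∂μ :=
        lintegral_mono fun v => mul_le_mul_left (lintegral_mono' hμ le_rfl) _
    _ = ENNReal.ofReal (beta α β) * rlIntegral μ (α + β) F s := by
        simp_rw [lintegral_rlKernel_mul_rlKernel hα hβ, mul_assoc]
        exact lintegral_const_mul' _ _ ENNReal.ofReal_ne_top

end rlIntegral

noncomputable def iteratedKernelConst (α c : ℝ) (n : ℕ) : ℝ :=
  c ^ (n + 1) * ∏ i ∈ Finset.range n, beta α ((i + 1) * α)

theorem iteratedKernelConst_nonneg {α c : ℝ} (hα : 0 < α) (hc : 0 ≤ c) (n : ℕ) :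
    0 ≤ iteratedKernelConst α c n :=
  mul_nonneg (pow_nonneg hc _) (Finset.prod_nonneg fun _ _ => (beta_pos hα (by positivity)).le)

theorem iteratedKernelConst_succ (α c : ℝ) (n : ℕ) :
    iteratedKernelConst α c (n + 1) = c * iteratedKernelConst α c n * beta α ((n + 1) * α) := by
  simp only [iteratedKernelConst, Finset.prod_range_succ]
  ring

section LpIoc

variable {T α c : ℝ}

local notation "μT" => volume.restrict (Ioc (0 : ℝ) T)

/-- With `α = H - 1/2` and `c = c(H)` this is the defining formula of `K*_H`. -/
def IsWeightedFractionalIntegral (α c : ℝ) (K : Lp ℝ 2 μT →L[ℝ] Lp ℝ 2 μT) : Prop :=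
  ∀ f : Lp ℝ 2 μT, (K f : ℝ → ℝ) =ᵐ[μT]
    fun s => c * s ^ (-α) * ∫ u in s..T, f u * u ^ α * (u - s) ^ (α - 1)

theorem memLp_rpow_neg_Ioc (hα : α < 1 / 2) (hT : 0 ≤ T) :
    MemLp (fun s : ℝ => s ^ (-α)) 2 μT := by
  refine (memLp_two_iff_integrable_sq (by fun_prop)).2 ?_
  have hint : IntegrableOn (fun s : ℝ => s ^ (-2 * α)) (Ioc 0 T) :=
    (intervalIntegrable_iff_integrableOn_Ioc_of_le hT).1
      (intervalIntegral.intervalIntegrable_rpow' (by linarith))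
  refine hint.congr_fun (fun s hs => ?_) measurableSet_Ioc
  rw [← Real.rpow_natCast, ← Real.rpow_mul hs.1.le]
  norm_num [mul_comm]

theorem lintegral_enorm_mul_rpow_le (hα : 0 ≤ α) (hT : 0 ≤ T) (g : Lp ℝ 2 μT) :
    ∫⁻ u, ‖g u‖ₑ * ENNReal.ofReal (u ^ α) ∂μT ≤
      ENNReal.ofReal (T ^ α * T ^ (1 / 2 : ℝ) * ‖g‖) := by
  calc ∫⁻ u, ‖g u‖ₑ * ENNReal.ofReal (u ^ α) ∂μT
      ≤ ∫⁻ u, ENNReal.ofReal (T ^ α) * ‖g u‖ₑ ∂μT := by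
        refine lintegral_mono_ae ?_
        filter_upwards [ae_restrict_mem measurableSet_Ioc] with u hu
        rw [mul_comm]
        exact mul_le_mul_left (ENNReal.ofReal_le_ofReal (Real.rpow_le_rpow hu.1.le hu.2 hα)) _
    _ = ENNReal.ofReal (T ^ α) * eLpNorm g 1 μT := by
        rw [lintegral_const_mul' _ _ ENNReal.ofReal_ne_top, eLpNorm_one_eq_lintegral_enorm]
    _ ≤ ENNReal.ofReal (T ^ α) * (eLpNorm g 2 μT * μT univ ^ (1 / 2 : ℝ)) := by
        gcongr
        have h := eLpNorm_le_eLpNorm_mul_rpow_measure_univ (p := 1) (q := 2) (by norm_num)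
          (Lp.aestronglyMeasurable g)
        rwa [show 1 / (1 : ℝ≥0∞).toReal - 1 / (2 : ℝ≥0∞).toReal = 1 / 2 by norm_num] at h
    _ = ENNReal.ofReal (T ^ α * T ^ (1 / 2 : ℝ) * ‖g‖) := by
        rw [Measure.restrict_apply_univ, Real.volume_Ioc, sub_zero,
          ENNReal.ofReal_rpow_of_nonneg hT (by norm_num), Lp.norm_def,
          ENNReal.ofReal_mul (by positivity), ENNReal.ofReal_mul (by positivity),
          ENNReal.ofReal_toReal (Lp.eLpNorm_ne_top g)]
        ring

theorem norm_le_of_ae_enorm_mul_rpow_le {A : ℝ} (hα : α < 1 / 2) (hT : 0 ≤ T) (hA : 0 ≤ A)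
    {h : Lp ℝ 2 μT} (hh : ∀ᵐ s ∂μT, ‖h s‖ₑ * ENNReal.ofReal (s ^ α) ≤ ENNReal.ofReal A) :
    ‖h‖ ≤ A * (eLpNorm (fun s : ℝ => s ^ (-α)) 2 μT).toReal := by
  have hbound : ∀ᵐ s ∂μT, ‖h s‖ₑ ≤ A.toNNReal * ‖s ^ (-α)‖ₑ := by
    filter_upwards [hh, ae_restrict_mem measurableSet_Ioc] with s hs hsT
    have hpos : 0 ≤ s ^ (-α) := Real.rpow_nonneg hsT.1.le _
    calc ‖h s‖ₑ = ‖h s‖ₑ * ENNReal.ofReal (s ^ α) * ENNReal.ofReal (s ^ (-α)) := by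
          rw [mul_assoc, ← ENNReal.ofReal_mul (Real.rpow_nonneg hsT.1.le _),
            ← Real.rpow_add hsT.1, add_neg_cancel, Real.rpow_zero, ENNReal.ofReal_one, mul_one]
      _ ≤ ENNReal.ofReal A * ENNReal.ofReal (s ^ (-α)) := mul_le_mul_left hs _
      _ = A.toNNReal * ‖s ^ (-α)‖ₑ := by rw [Real.enorm_of_nonneg hpos]; rfl
  have hφ := (memLp_rpow_neg_Ioc hα hT).eLpNorm_ne_top
  rw [Lp.norm_def]
  calc (eLpNorm h 2 μT).toReal
      ≤ (A.toNNReal * eLpNorm (fun s : ℝ => s ^ (-α)) 2 μT).toReal :=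
        ENNReal.toReal_mono (ENNReal.mul_ne_top ENNReal.coe_ne_top hφ)
          (eLpNorm_le_mul_eLpNorm_of_ae_le_mul' hbound 2)
    _ = A * (eLpNorm (fun s : ℝ => s ^ (-α)) 2 μT).toReal := by
        rw [ENNReal.toReal_mul, ENNReal.coe_toReal, Real.coe_toNNReal _ hA]

theorem ae_enorm_mul_rpow_le_rlIntegral (hc : 0 ≤ c) {f g : ℝ → ℝ}
    (hg : g =ᵐ[μT] fun s => c * s ^ (-α) * ∫ u in s..T, f u * u ^ α * (u - s) ^ (α - 1)) :
    ∀ᵐ s ∂μT, ‖g s‖ₑ * ENNReal.ofReal (s ^ α) ≤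
      ENNReal.ofReal c * rlIntegral μT α (fun u => ‖f u‖ₑ * ENNReal.ofReal (u ^ α)) s := by
  filter_upwards [hg, ae_restrict_mem measurableSet_Ioc] with s hgs hs
  have hweight : ‖c * s ^ (-α)‖ₑ * ENNReal.ofReal (s ^ α) = ENNReal.ofReal c := by
    have hcs : 0 ≤ c * s ^ (-α) := mul_nonneg hc (Real.rpow_nonneg hs.1.le _)
    rw [Real.enorm_of_nonneg hcs, ← ENNReal.ofReal_mul hcs, mul_assoc, ← Real.rpow_add hs.1,
      neg_add_cancel, Real.rpow_zero, mul_one]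
  rw [hgs, enorm_mul, mul_right_comm, hweight, intervalIntegral.integral_of_le hs.2]
  refine mul_le_mul_right ((enorm_integral_le_lintegral_enorm _).trans ?_) _
  calc ∫⁻ u in Ioc s T, ‖f u * u ^ α * (u - s) ^ (α - 1)‖ₑ
      = ∫⁻ u in Ioc s T, rlKernel α s u * (‖f u‖ₑ * ENNReal.ofReal (u ^ α)) := by
        refine setLIntegral_congr_fun measurableSet_Ioc fun u hu => ?_
        rw [rlKernel, if_pos hu.1, enorm_mul, enorm_mul,
          Real.enorm_of_nonneg (Real.rpow_nonneg (hs.1.trans hu.1).le _),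
          Real.enorm_of_nonneg (Real.rpow_nonneg (sub_nonneg.2 hu.1.le) _)]
        ring
    _ ≤ _ := lintegral_mono_set (Ioc_subset_Ioc_left hs.1.le)

theorem ae_enorm_pow_succ_apply_mul_rpow_le {K : Lp ℝ 2 μT →L[ℝ] Lp ℝ 2 μT}
    (hK : IsWeightedFractionalIntegral α c K) (hα : 0 < α) (hc : 0 ≤ c) (n : ℕ)
    (g : Lp ℝ 2 μT) :
    ∀ᵐ s ∂μT, ‖(K ^ (n + 1)) g s‖ₑ * ENNReal.ofReal (s ^ α) ≤
      ENNReal.ofReal (iteratedKernelConst α c n) *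
        rlIntegral μT ((n + 1) * α) (fun u => ‖g u‖ₑ * ENNReal.ofReal (u ^ α)) s := by
  set G := fun u => ‖g u‖ₑ * ENNReal.ofReal (u ^ α)
  induction n with
  | zero => simpa [iteratedKernelConst] using ae_enorm_mul_rpow_le_rlIntegral hc (hK g)
  | succ n ih =>
    have hG : AEMeasurable G μT := (Lp.aestronglyMeasurable g).enorm.mul (by fun_prop)
    have hexp : α + (n + 1) * α = ((n + 1 : ℕ) + 1) * α := by push_cast; ring
    rw [pow_succ', mul_apply_eq_comp]
    filter_upwards [ae_enorm_mul_rpow_le_rlIntegral hc (hK ((K ^ (n + 1)) g))] with s hs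
    calc _ ≤ _ := hs
      _ ≤ ENNReal.ofReal c * rlIntegral μT α (fun u => ENNReal.ofReal (iteratedKernelConst α c n) *
            rlIntegral μT ((n + 1) * α) G u) s :=
          mul_le_mul_right (rlIntegral_mono_ae ih s) _
      _ ≤ ENNReal.ofReal c * (ENNReal.ofReal (iteratedKernelConst α c n) *
            (ENNReal.ofReal (beta α ((n + 1) * α)) * rlIntegral μT (α + (n + 1) * α) G s)) := by
          rw [rlIntegral_const_mul ENNReal.ofReal_ne_top]
          gcongr
          exact rlIntegral_rlIntegral_le Measure.restrict_le_self hα (by positivity) hG s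
      _ = _ := by
          rw [← mul_assoc, ← mul_assoc, ← ENNReal.ofReal_mul hc,
            ← ENNReal.ofReal_mul (mul_nonneg hc (iteratedKernelConst_nonneg hα hc n)),
            ← iteratedKernelConst_succ, hexp]

theorem norm_pow_succ_le {K : Lp ℝ 2 μT →L[ℝ] Lp ℝ 2 μT}
    (hK : IsWeightedFractionalIntegral α c K) (hα : 0 < α) (hα2 : α < 1 / 2) (hc : 0 ≤ c)
    (hT : 0 < T) {n : ℕ} (hn : 1 ≤ (n + 1) * α) :
    ‖K ^ (n + 1)‖ ≤ c * T ^ (2 * α - 1 / 2) * (eLpNorm (fun s : ℝ => s ^ (-α)) 2 μT).toReal *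
      ∏ i ∈ Finset.range n, c * T ^ α * beta α ((i + 1) * α) := by
  have hC := iteratedKernelConst_nonneg hα hc n
  set M := iteratedKernelConst α c n * T ^ ((n + 1) * α - 1) * (T ^ α * T ^ (1 / 2 : ℝ)) with hM
  have hTpow : T ^ ((n + 1) * α - 1) * (T ^ α * T ^ (1 / 2 : ℝ)) =
      T ^ (2 * α - 1 / 2) * (T ^ α) ^ n := by
    rw [← Real.rpow_natCast, ← Real.rpow_mul hT.le, ← Real.rpow_add hT, ← Real.rpow_add hT,
      ← Real.rpow_add hT]
    congr 1
    ring
  refine ContinuousLinearMap.opNorm_le_bound _ (mul_nonneg (by positivity)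
    (Finset.prod_nonneg fun i _ => mul_nonneg (by positivity) (beta_pos hα (by positivity)).le))
    fun g => ?_
  have hpt : ∀ᵐ s ∂μT,
      ‖(K ^ (n + 1)) g s‖ₑ * ENNReal.ofReal (s ^ α) ≤ ENNReal.ofReal (M * ‖g‖) := by
    filter_upwards [ae_enorm_pow_succ_apply_mul_rpow_le hK hα hc n g,
      ae_restrict_mem measurableSet_Ioc] with s hs hsT
    calc _ ≤ _ := hs
      _ ≤ ENNReal.ofReal (iteratedKernelConst α c n) * (ENNReal.ofReal (T ^ ((n + 1) * α - 1)) *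
            ENNReal.ofReal (T ^ α * T ^ (1 / 2 : ℝ) * ‖g‖)) := by
          gcongr
          refine (rlIntegral_le_mul_lintegral (T := T) hn ?_ hsT.1.le).trans ?_
          · exact (ae_restrict_mem measurableSet_Ioc).mono fun u hu => hu.2
          · gcongr
            exact lintegral_enorm_mul_rpow_le hα.le hT.le g
      _ = ENNReal.ofReal (M * ‖g‖) := by
          rw [← ENNReal.ofReal_mul (by positivity), ← ENNReal.ofReal_mul hC, hM]
          congr 1
          ring
  calc ‖(K ^ (n + 1)) g‖ ≤ M * ‖g‖ * (eLpNorm (fun s : ℝ => s ^ (-α)) 2 μT).toReal :=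
        norm_le_of_ae_enorm_mul_rpow_le hα2 hT.le (by positivity) hpt
    _ = _ := by
        rw [hM, mul_assoc (iteratedKernelConst α c n), hTpow, iteratedKernelConst,
          Finset.prod_mul_distrib, Finset.prod_mul_distrib,
          Finset.prod_const, Finset.prod_const, Finset.card_range]
        ring

theorem summable_pow_mul_norm_pow {K : Lp ℝ 2 μT →L[ℝ] Lp ℝ 2 μT}
    (hK : IsWeightedFractionalIntegral α c K) (hα : 0 < α) (hα2 : α < 1 / 2) (hc : 0 ≤ c)
    (hT : 0 < T) (r : ℝ) : Summable fun n => r ^ n * ‖K ^ n‖ := by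
  have hexp : Tendsto (fun i : ℕ => ((i : ℝ) + 1) * α) atTop atTop :=
    (tendsto_atTop_add_const_right atTop 1 tendsto_natCast_atTop_atTop).atTop_mul_const hα
  have hb : Tendsto (fun i : ℕ => c * T ^ α * beta α ((i + 1) * α)) atTop (𝓝 0) := by
    simpa only [mul_zero, Function.comp_def] using
      ((tendsto_beta_atTop hα).comp hexp).const_mul (c * T ^ α)
  exact summable_pow_mul_norm_pow_of_le_prod hb
    ((hexp.eventually_ge_atTop 1).mono fun n hn => norm_pow_succ_le hK hα hα2 hc hT hn) r

end LpIoc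

/-- The Neumann series `(1/a)∑_k (−b/a)^k (K*_H)^k` converges absolutely in operator norm
and yields a two-sided inverse of `a·I + b·K*_H` on `L²([0,T])`; in particular
`a·I + b·K*_H` is a bounded bijection of `L²([0,T])`.  Here `K*_H` is (any) bounded
operator on `L²([0,T])` realizing the formula
`(K*_H f)(s) = c(H)·s^{−(H−1/2)}·∫_s^T f(u)u^{H−1/2}(u−s)^{H−3/2} du`. -/
theorem neumann_series_inverse (H T a b : ℝ) (hH : H ∈ Set.Ioo (1/2 : ℝ) 1) (hT : 0 < T)
    (ha : a ≠ 0)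
    (Kop : Lp ℝ 2 (volume.restrict (Set.Ioc (0:ℝ) T)) →L[ℝ]
            Lp ℝ 2 (volume.restrict (Set.Ioc (0:ℝ) T)))
    (hKop : ∀ f : Lp ℝ 2 (volume.restrict (Set.Ioc (0:ℝ) T)),
      (Kop f : ℝ → ℝ) =ᵐ[volume.restrict (Set.Ioc (0:ℝ) T)]
        fun s => cH H * s ^ (-(H - 1/2)) *
          ∫ u in s..T, (f : ℝ → ℝ) u * u ^ (H - 1/2) * (u - s) ^ (H - 3/2)) :
    Summable (fun k : ℕ => ‖((1/a) * (-b/a)^k) • Kop ^ k‖) ∧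
    (∑' k : ℕ, ((1/a) * (-b/a)^k) • Kop ^ k).comp
        (a • ContinuousLinearMap.id ℝ (Lp ℝ 2 (volume.restrict (Set.Ioc (0:ℝ) T))) + b • Kop)
      = ContinuousLinearMap.id ℝ (Lp ℝ 2 (volume.restrict (Set.Ioc (0:ℝ) T))) ∧
    (a • ContinuousLinearMap.id ℝ (Lp ℝ 2 (volume.restrict (Set.Ioc (0:ℝ) T))) + b • Kop).comp
        (∑' k : ℕ, ((1/a) * (-b/a)^k) • Kop ^ k)
      = ContinuousLinearMap.id ℝ (Lp ℝ 2 (volume.restrict (Set.Ioc (0:ℝ) T))) ∧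
    Function.Bijective
      ⇑(a • ContinuousLinearMap.id ℝ (Lp ℝ 2 (volume.restrict (Set.Ioc (0:ℝ) T))) + b • Kop) := by
  have hα : 0 < H - 1 / 2 := by linarith [hH.1]
  have hα2 : H - 1 / 2 < 1 / 2 := by linarith [hH.2]
  have hc : 0 ≤ cH H := mul_nonneg (Real.sqrt_nonneg _) hα.le
  have hK : IsWeightedFractionalIntegral (H - 1 / 2) (cH H) Kop := by
    simpa only [IsWeightedFractionalIntegral, show H - 3 / 2 = H - 1 / 2 - 1 by ring] using hKop
  have hsum : Summable fun k : ℕ => ‖((1 / a) * (-b / a) ^ k) • Kop ^ k‖ := by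
    simpa only [norm_smul, norm_mul, norm_pow, mul_assoc] using
      (summable_pow_mul_norm_pow hK hα hα2 hc hT ‖-b / a‖).mul_left ‖1 / a‖
  obtain ⟨hleft, hright⟩ := neumann_series_mul_eq_one ha hsum.of_norm
  exact ⟨hsum, hleft, hright, Function.bijective_iff_has_inverse.2
    ⟨_, fun x => DFunLike.congr_fun hleft x, fun y => DFunLike.congr_fun hright y⟩⟩
end
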